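/- arXiv:2412.18018 — 3 statements merged into one kernel-verified Lean document; each statement's English description precedes it below -/
import Mathlib

section
/- For every N ≥ 2, every KC-PMI P on N parties, and every subsystem Y with |Y| ≥ 2, setting n := |Max(pos_<(Y))|: (i) β(Y) is vanishing or completely essential if and only if Max(pos_<(Y)) = ∅; (ii) β(Y) is either essential-but-not-completely-essential or partial if and only if n = 1, or n ≥ 2 and the elements of Max(pos_<(Y)) are pairwise disjoint; (iii) β(Y) is positive and non-essential if and only if n ≥ 2 and every two distinct elements Z_i, Z_j of Max(pos_<(Y)) satisfy Z_i ∩ Z_j ≠ ∅ and Z_i ∪ Z_j = Y. -/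
namespace HEC

/-- The parties `⟦N⟧ = {0,1,…,N}`, where `0` is the purifier. -/
abbrev Party (N : ℕ) := Fin (N + 1)

/-- A collection of parties. -/
abbrev PSet (N : ℕ) := Finset (Party N)

/-- MI instances: unordered pairs of subsets of parties. -/
abbrev MI (N : ℕ) := Sym2 (PSet N)

/-- `m` is an MI instance, i.e. an unordered pair of disjoint nonempty subsets of `⟦N⟧`. -/
def IsMIInst {N : ℕ} (m : MI N) : Prop :=
  ∃ Y Z : PSet N, m = s(Y, Z) ∧ Y.Nonempty ∧ Z.Nonempty ∧ Disjoint Y Z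

/-- The MI-poset order: `{Y,Z} ⪯ {Y',Z'}` iff (`Y ⊆ Y'` and `Z ⊆ Z'`) or
(`Y ⊆ Z'` and `Z ⊆ Y'`).  (The two cases are absorbed by the existential over
representatives of the unordered pairs.) -/
def MIle {N : ℕ} (m m' : MI N) : Prop :=
  ∃ Y Z Y' Z' : PSet N, m = s(Y, Z) ∧ m' = s(Y', Z') ∧ Y ⊆ Y' ∧ Z ⊆ Z'

/-- An `N`-party entropy vector, extended to all subsets of `⟦N⟧` by the purification
convention: `S ∅ = 0` and `S Y = S (⟦N⟧ \ Y)` whenever `0 ∈ Y`. -/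
structure EntropyVec (N : ℕ) where
  S : PSet N → ℝ
  S_empty : S ∅ = 0
  S_purify : ∀ Y : PSet N, (0 : Party N) ∈ Y → S Y = S (Finset.univ \ Y)

/-- Mutual information `I(Y:Z) = S_Y + S_Z - S_{Y∪Z}`. -/
def EntropyVec.I {N : ℕ} (v : EntropyVec N) (Y Z : PSet N) : ℝ :=
  v.S Y + v.S Z - v.S (Y ∪ Z)

/-- Membership in the subadditivity cone: `I(Y:Z) ≥ 0` for every MI instance. -/
def EntropyVec.InSAC {N : ℕ} (v : EntropyVec N) : Prop :=
  ∀ Y Z : PSet N, Y.Nonempty → Z.Nonempty → Disjoint Y Z → 0 ≤ v.I Y Z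

/-- The pattern of marginal independence of `v`: the MI instances vanishing on `v`. -/
def EntropyVec.PMI {N : ℕ} (v : EntropyVec N) : Set (MI N) :=
  {m | ∃ Y Z : PSet N, m = s(Y, Z) ∧ Y.Nonempty ∧ Z.Nonempty ∧ Disjoint Y Z ∧ v.I Y Z = 0}

/-- `P` is a down-set in the MI-poset. -/
def IsMIDownSet {N : ℕ} (P : Set (MI N)) : Prop :=
  ∀ m m' : MI N, IsMIInst m → m' ∈ P → MIle m m' → m ∈ P

/-- `P` is a KC-PMI: the PMI of some entropy vector in the subadditivity cone,
which moreover is a down-set in the MI-poset. -/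
def IsKCPMI {N : ℕ} (P : Set (MI N)) : Prop :=
  (∃ v : EntropyVec N, v.InSAC ∧ P = v.PMI) ∧ IsMIDownSet P

/-- The β-set of `X`: all MI instances `{Y,Z}` with `Y ∪ Z = X`. -/
def betaSet {N : ℕ} (X : PSet N) : Set (MI N) :=
  {m | ∃ Y Z : PSet N, m = s(Y, Z) ∧ Y.Nonempty ∧ Z.Nonempty ∧ Disjoint Y Z ∧ Y ∪ Z = X}

/-- The antichain `A` of minimal elements of `P̄ = M_N ∖ P`. -/
def minimalMI {N : ℕ} (P : Set (MI N)) : Set (MI N) :=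
  {m | IsMIInst m ∧ m ∉ P ∧ ∀ m' : MI N, IsMIInst m' → m' ∉ P → MIle m' m → m' = m}

/-- `β(X)` is positive: `β(X) ⊆ P̄`. -/
def BPos {N : ℕ} (P : Set (MI N)) (X : PSet N) : Prop :=
  ∀ m ∈ betaSet X, m ∉ P

/-- `β(X)` is vanishing: `β(X) ⊆ P`. -/
def BVan {N : ℕ} (P : Set (MI N)) (X : PSet N) : Prop :=
  betaSet X ⊆ P

/-- `β(X)` is partial: it has elements both in `P` and in `P̄`. -/
def BPart {N : ℕ} (P : Set (MI N)) (X : PSet N) : Prop :=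
  (∃ m ∈ betaSet X, m ∈ P) ∧ (∃ m ∈ betaSet X, m ∉ P)

/-- `β(X)` is essential: `β(X) ∩ A ≠ ∅`. -/
def BEss {N : ℕ} (P : Set (MI N)) (X : PSet N) : Prop :=
  ∃ m ∈ betaSet X, m ∈ minimalMI P

/-- `β(X)` is completely essential: `β(X) ⊆ A`. -/
def BCEss {N : ℕ} (P : Set (MI N)) (X : PSet N) : Prop :=
  betaSet X ⊆ minimalMI P

/-- `β(X)` is non-essential: `β(X) ∩ A = ∅`. -/
def BNEss {N : ℕ} (P : Set (MI N)) (X : PSet N) : Prop :=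
  ∀ m ∈ betaSet X, m ∉ minimalMI P

/-- `pos_<(Y)`: the proper subsystems `Z ⊊ Y` with `|Z| ≥ 2` and `β(Z)` positive. -/
def posBelow {N : ℕ} (P : Set (MI N)) (Y : PSet N) : Set (PSet N) :=
  {Z | Z ⊂ Y ∧ 2 ≤ Z.card ∧ BPos P Z}

/-- `Max(pos_<(Y))`: the inclusion-maximal elements of `pos_<(Y)`. -/
def maxPosBelow {N : ℕ} (P : Set (MI N)) (Y : PSet N) : Set (PSet N) :=
  {Z | Z ∈ posBelow P Y ∧ ∀ Z' ∈ posBelow P Y, Z ⊆ Z' → Z = Z'}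

/-- The MI instance `m = {Y,Z}` splits `X` if `X ∩ Y ≠ ∅` and `X ∩ Z ≠ ∅`. -/
def Splits {N : ℕ} (m : MI N) (X : PSet N) : Prop :=
  ∃ Y Z : PSet N, m = s(Y, Z) ∧ (X ∩ Y).Nonempty ∧ (X ∩ Z).Nonempty

/-- The hyperedges of the correlation hypergraph `H_P`: one hyperedge `e_X` for each
`X ⊆ ⟦N⟧` (with `|X| ≥ 2`) whose β-set is positive.  Vertices `v_ℓ` are identified
with the parties `ℓ ∈ ⟦N⟧`, and hyperedges with the corresponding subsystems. -/
def Hedge {N : ℕ} (P : Set (MI N)) : Set (PSet N) :=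
  {X | 2 ≤ X.card ∧ BPos P X}

/-- The hyperedges of the sub-hypergraph `H_Y`: the hyperedges `e_Z` with `Z ⊊ Y`. -/
def subEdges {N : ℕ} (P : Set (MI N)) (Y : PSet N) : Set (PSet N) :=
  {Z | Z ⊂ Y ∧ Z ∈ Hedge P}

/-- One step in a hypergraph with hyperedge set `E`: `a` and `b` lie in a common
hyperedge. -/
def hStep {N : ℕ} (E : Set (PSet N)) (a b : Party N) : Prop :=
  ∃ e ∈ E, a ∈ e ∧ b ∈ e

/-- Connectivity of the hypergraph with vertex set `V` and hyperedge set `E`: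
every two vertices are joined by a path (a one-vertex hypergraph is connected). -/
def hConn {N : ℕ} (V : PSet N) (E : Set (PSet N)) : Prop :=
  ∀ a ∈ V, ∀ b ∈ V, Relation.ReflTransGen (hStep E) a b

/-- The vertex set of the connected component of `a` in the hypergraph with
vertex set `V` and hyperedge set `E`. -/
def hComp {N : ℕ} (V : PSet N) (E : Set (PSet N)) (a : Party N) : Set (Party N) :=
  {b | b ∈ V ∧ Relation.ReflTransGen (hStep E) a b}

/-- A clique of the line graph `L_{H_P}`: a set of hyperedges of `H_P` which are
pairwise adjacent (distinct hyperedges being adjacent iff they intersect). -/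
def IsLineClique {N : ℕ} (P : Set (MI N)) (Q : Set (PSet N)) : Prop :=
  Q ⊆ Hedge P ∧ ∀ e ∈ Q, ∀ f ∈ Q, e ≠ f → (e ∩ f).Nonempty

/-- A max-clique of the line graph `L_{H_P}`: a (nonempty) clique which is maximal
under inclusion. -/
def IsMaxClique {N : ℕ} (P : Set (MI N)) (Q : Set (PSet N)) : Prop :=
  Q.Nonempty ∧ IsLineClique P Q ∧ ∀ Q' : Set (PSet N), IsLineClique P Q' → Q ⊆ Q' → Q = Q'

/-- `Q^∩`: the intersection of the hyperedges in `Q`, viewed as sets of vertices. -/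
def qInter {N : ℕ} (Q : Set (PSet N)) : Set (Party N) :=
  {ℓ | ∀ e ∈ Q, ℓ ∈ e}

section Aux

variable {N : ℕ}

lemma I_comm (v : EntropyVec N) (A B : PSet N) : v.I A B = v.I B A := by
  simp only [EntropyVec.I, Finset.union_comm]; ring

/-- The key entropy identity behind "Lemma K". -/
lemma I_K (v : EntropyVec N) (X Y C : PSet N) :
    v.I (X ∪ Y) C + v.I X Y = v.I X (Y ∪ C) + v.I Y C := by
  simp only [EntropyVec.I, Finset.union_assoc]; ring

lemma isInst_mk {A B : PSet N} (hA : A.Nonempty) (hB : B.Nonempty)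
    (hd : Disjoint A B) : IsMIInst (s(A, B)) :=
  ⟨A, B, rfl, hA, hB, hd⟩

lemma inst_props {A B : PSet N} (h : IsMIInst (s(A, B))) :
    A.Nonempty ∧ B.Nonempty ∧ Disjoint A B := by
  obtain ⟨U, V, hUV, hU, hV, hd⟩ := h
  rcases Sym2.eq_iff.1 hUV with ⟨rfl, rfl⟩ | ⟨rfl, rfl⟩
  · exact ⟨hU, hV, hd⟩
  · exact ⟨hV, hU, hd.symm⟩

lemma MIle_mk {A B C D : PSet N} (h1 : A ⊆ C) (h2 : B ⊆ D) :
    MIle s(A, B) s(C, D) :=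
  ⟨A, B, C, D, rfl, rfl, h1, h2⟩

lemma MIle_elim {A B C D : PSet N} (h : MIle s(A, B) s(C, D)) :
    (A ⊆ C ∧ B ⊆ D) ∨ (A ⊆ D ∧ B ⊆ C) := by
  obtain ⟨U, V, U', V', hUV, hUV', h1, h2⟩ := h
  rcases Sym2.eq_iff.1 hUV with ⟨rfl, rfl⟩ | ⟨rfl, rfl⟩ <;>
    rcases Sym2.eq_iff.1 hUV' with ⟨rfl, rfl⟩ | ⟨rfl, rfl⟩ <;> tauto

lemma mem_PMI_iff (v : EntropyVec N) {A B : PSet N} (hA : A.Nonempty)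
    (hB : B.Nonempty) (hd : Disjoint A B) :
    s(A, B) ∈ v.PMI ↔ v.I A B = 0 := by
  constructor
  · rintro ⟨U, V, hUV, hU, hV, hd', hI⟩
    rcases Sym2.eq_iff.1 hUV with ⟨rfl, rfl⟩ | ⟨rfl, rfl⟩
    · exact hI
    · rw [I_comm]; exact hI
  · intro h; exact ⟨A, B, rfl, hA, hB, hd, h⟩

lemma mem_beta_mk {A B X : PSet N} (hA : A.Nonempty) (hB : B.Nonempty)
    (hd : Disjoint A B) (hU : A ∪ B = X) : s(A, B) ∈ betaSet X :=
  ⟨A, B, rfl, hA, hB, hd, hU⟩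

lemma downset_mem {P : Set (MI N)} (hds : IsMIDownSet P) {A B C D : PSet N}
    (hA : A.Nonempty) (hB : B.Nonempty) (hd : Disjoint A B)
    (h1 : A ⊆ C) (h2 : B ⊆ D) (h : s(C, D) ∈ P) : s(A, B) ∈ P :=
  hds _ _ (isInst_mk hA hB hd) h (MIle_mk h1 h2)

lemma zero_of_memP {P : Set (MI N)} {v : EntropyVec N} (hPv : P = v.PMI)
    {A B : PSet N} (hA : A.Nonempty) (hB : B.Nonempty) (hd : Disjoint A B)
    (h : s(A, B) ∈ P) : v.I A B = 0 :=
  (mem_PMI_iff v hA hB hd).1 (hPv ▸ h)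

lemma memP_of_zero {P : Set (MI N)} {v : EntropyVec N} (hPv : P = v.PMI)
    {A B : PSet N} (hA : A.Nonempty) (hB : B.Nonempty) (hd : Disjoint A B)
    (h : v.I A B = 0) : s(A, B) ∈ P := by
  rw [hPv]; exact (mem_PMI_iff v hA hB hd).2 h

/-- Strict sub-instances of a minimal instance lie in `P`. -/
lemma minimal_sub_mem {P : Set (MI N)} {A B : PSet N}
    (hmin : s(A, B) ∈ minimalMI P) {U V : PSet N} (hU : U.Nonempty)
    (hV : V.Nonempty) (hd : Disjoint U V) (hUA : U ⊆ A) (hVB : V ⊆ B)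
    (hne : ¬(U = A ∧ V = B)) : s(U, V) ∈ P := by
  obtain ⟨hAne, hBne, hAB⟩ := inst_props hmin.1
  by_contra h
  have := hmin.2.2 _ (isInst_mk hU hV hd) h (MIle_mk hUA hVB)
  rcases Sym2.eq_iff.1 this with ⟨hUA', hVB'⟩ | ⟨hUB, hVA⟩
  · exact hne ⟨hUA', hVB'⟩
  · obtain ⟨x, hx⟩ := hU
    exact Finset.disjoint_left.1 hAB (hUA hx) (hUB ▸ hx)

/-- Every instance outside `P` has a minimal instance below it (representative form). -/
lemma exists_minimal_le {P : Set (MI N)} :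
    ∀ n : ℕ, ∀ A B : PSet N, A.card + B.card ≤ n → A.Nonempty → B.Nonempty →
      Disjoint A B → s(A, B) ∉ P →
      ∃ C D : PSet N, C ⊆ A ∧ D ⊆ B ∧ C.Nonempty ∧ D.Nonempty ∧ Disjoint C D ∧
        s(C, D) ∈ minimalMI P := by
  intro n
  induction n with
  | zero =>
      intro A B hcard hA _ _ _
      obtain ⟨x, hx⟩ := hA
      have : 0 < A.card := Finset.card_pos.2 ⟨x, hx⟩
      omega
  | succ n ih =>
      intro A B hcard hA hB hd hP
      by_cases h : ∃ C D : PSet N, C ⊆ A ∧ D ⊆ B ∧ C.Nonempty ∧ D.Nonempty ∧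
          Disjoint C D ∧ ¬(C = A ∧ D = B) ∧ s(C, D) ∉ P
      · obtain ⟨C, D, hCA, hDB, hC, hD, hCD, hne, hCDP⟩ := h
        have hlt : C.card + D.card < A.card + B.card := by
          rcases not_and_or.1 hne with h' | h'
          · have : C ⊂ A := hCA.ssubset_of_ne h'
            have h1 : C.card < A.card := Finset.card_lt_card this
            have h2 : D.card ≤ B.card := Finset.card_le_card hDB
            omega
          · have : D ⊂ B := hDB.ssubset_of_ne h'
            have h1 : D.card < B.card := Finset.card_lt_card this
            have h2 : C.card ≤ A.card := Finset.card_le_card hCA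
            omega
        obtain ⟨E, F, hEC, hFD, hrest⟩ :=
          ih C D (by omega) hC hD hCD hCDP
        exact ⟨E, F, hEC.trans hCA, hFD.trans hDB, hrest⟩
      · refine ⟨A, B, subset_rfl, subset_rfl, hA, hB, hd, isInst_mk hA hB hd, hP, ?_⟩
        intro m' hm' hm'P hle
        obtain ⟨U, V, U', V', hm'e, hme, h1, h2⟩ := hle
        obtain ⟨hU, hV, hUV⟩ := inst_props (hm'e ▸ hm')
        push_neg at h
        rcases Sym2.eq_iff.1 hme with ⟨rfl, rfl⟩ | ⟨rfl, rfl⟩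
        · by_cases he : U = A ∧ V = B
          · rw [hm'e, he.1, he.2]
          · exact absurd (h U V h1 h2 hU hV hUV (fun e1 e2 => he ⟨e1, e2⟩)) (by simpa [hm'e] using hm'P)
        · by_cases he : V = A ∧ U = B
          · rw [hm'e, he.1, he.2, Sym2.eq_swap]
          · have : s(V, U) = m' := by rw [hm'e, Sym2.eq_swap]
            exact absurd (h V U h2 h1 hV hU hUV.symm (fun e1 e2 => he ⟨e1, e2⟩))
              (by rw [this]; exact hm'P)

/-- Claim C: if `{A,B}` is a minimal instance of `P̄`, then `β(A∪B)` is positive. -/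
lemma minimal_union_pos {P : Set (MI N)} {v : EntropyVec N} (hv : v.InSAC)
    (hPv : P = v.PMI) (hds : IsMIDownSet P) {A B : PSet N}
    (hmin : s(A, B) ∈ minimalMI P) : BPos P (A ∪ B) := by
  rintro m ⟨C, D, rfl, hC, hD, hCD, hU⟩ hCDP
  obtain ⟨hA, hB, hAB⟩ := inst_props hmin.1
  have hABP : s(A, B) ∉ P := hmin.2.1
  set p := A ∩ C with hp
  set q := A ∩ D with hq
  set r := B ∩ C with hr
  set s := B ∩ D with hs
  have eA : p ∪ q = A := by
    rw [hp, hq, ← Finset.inter_union_distrib_left, hU]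
    exact Finset.inter_eq_left.2 Finset.subset_union_left
  have eB : r ∪ s = B := by
    rw [hr, hs, ← Finset.inter_union_distrib_left, hU]
    exact Finset.inter_eq_left.2 Finset.subset_union_right
  have eC : p ∪ r = C := by
    rw [hp, hr, ← Finset.union_inter_distrib_right]
    exact Finset.inter_eq_right.2 (hU ▸ Finset.subset_union_left)
  have eD : q ∪ s = D := by
    rw [hq, hs, ← Finset.union_inter_distrib_right]
    exact Finset.inter_eq_right.2 (hU ▸ Finset.subset_union_right)
  have dpq : Disjoint p q := hCD.mono Finset.inter_subset_right Finset.inter_subset_right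
  have drs : Disjoint r s := hCD.mono Finset.inter_subset_right Finset.inter_subset_right
  have dpr : Disjoint p r := hAB.mono Finset.inter_subset_left Finset.inter_subset_left
  have dqs : Disjoint q s := hAB.mono Finset.inter_subset_left Finset.inter_subset_left
  have hICD : v.I C D = 0 := zero_of_memP hPv hC hD hCD hCDP
  have finish : v.I A B = 0 → False := fun h0 =>
    hABP (memP_of_zero hPv hA hB hAB h0)
  -- case analysis on which of the four pieces is empty
  rcases p.eq_empty_or_nonempty with hpe | hpne
  · -- p = ∅ : A = q, C = r
    have heA : A = q := by rw [← eA, hpe, Finset.empty_union]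
    have heC : C = r := by rw [← eC, hpe, Finset.empty_union]
    rcases s.eq_empty_or_nonempty with hse | hsne
    · -- s = ∅ : D = q = A, C = r = B → s(C,D) = s(A,B)
      have heD : D = A := by rw [← eD, hse, Finset.union_empty, heA]
      have heB : B = C := by rw [← eB, hse, Finset.union_empty, heC]
      exact hABP (by rw [show s(A,B) = s(C,D) by rw [heD, heB, Sym2.eq_swap]]; exact hCDP)
    · have hrne : r.Nonempty := heC ▸ hC
      have hsB : ¬(A = A ∧ s = B) := by
        rintro ⟨-, hh⟩
        obtain ⟨x, hx⟩ := hrne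
        have hxB : x ∈ B := by rw [← eB]; exact Finset.mem_union_left s hx
        exact Finset.disjoint_left.1 drs hx (by rw [hh]; exact hxB)
      have hdAs : Disjoint A s := hAB.mono_right Finset.inter_subset_left
      have hIAs : v.I A s = 0 := zero_of_memP hPv hA hsne hdAs
        (minimal_sub_mem hmin hA hsne hdAs subset_rfl (hs ▸ Finset.inter_subset_left) hsB)
      have hK := I_K v A s r
      have e1 : A ∪ s = D := by rw [heA, eD]
      have e2 : s ∪ r = B := by rw [Finset.union_comm, eB]
      rw [e1, e2, hIAs] at hK
      have h1 : v.I D r = 0 := by rw [heC] at hICD; rw [I_comm]; exact hICD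
      have h2 : 0 ≤ v.I s r := hv s r hsne hrne drs.symm
      have h3 : 0 ≤ v.I A B := hv A B hA hB hAB
      exact finish (by linarith)
  rcases q.eq_empty_or_nonempty with hqe | hqne
  · -- q = ∅ : A = p, D = s
    have heA : A = p := by rw [← eA, hqe, Finset.union_empty]
    have heD : D = s := by rw [← eD, hqe, Finset.empty_union]
    rcases r.eq_empty_or_nonempty with hre | hrne
    · have heC : C = A := by rw [← eC, hre, Finset.union_empty, heA]
      have heB : B = D := by rw [← eB, hre, Finset.empty_union, heD]
      exact hABP (by rw [show s(A,B) = s(C,D) by rw [heC, heB]]; exact hCDP)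
    · have hsne : s.Nonempty := heD ▸ hD
      have hrB : ¬(A = A ∧ r = B) := by
        rintro ⟨-, hh⟩
        obtain ⟨x, hx⟩ := hsne
        have hxB : x ∈ B := by rw [← eB]; exact Finset.mem_union_right r hx
        exact Finset.disjoint_left.1 drs (by rw [hh]; exact hxB) hx
      have hdAr : Disjoint A r := hAB.mono_right Finset.inter_subset_left
      have hIAr : v.I A r = 0 := zero_of_memP hPv hA hrne hdAr
        (minimal_sub_mem hmin hA hrne hdAr subset_rfl (hr ▸ Finset.inter_subset_left) hrB)
      have hK := I_K v A r s
      have e1 : A ∪ r = C := by rw [heA, eC]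
      have e2 : r ∪ s = B := eB
      rw [e1, e2, hIAr] at hK
      have h1 : v.I C s = 0 := by rw [← heD]; exact hICD
      have h2 : 0 ≤ v.I r s := hv r s hrne hsne drs
      have h3 : 0 ≤ v.I A B := hv A B hA hB hAB
      exact finish (by linarith)
  rcases r.eq_empty_or_nonempty with hre | hrne
  · -- r = ∅ : B = s, C = p
    have heB : B = s := by rw [← eB, hre, Finset.empty_union]
    have heC : C = p := by rw [← eC, hre, Finset.union_empty]
    have hqA : ¬(q = A ∧ B = B) := by
      rintro ⟨hh, -⟩
      obtain ⟨x, hx⟩ := hpne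
      have hxA : x ∈ A := by rw [← eA]; exact Finset.mem_union_left q hx
      exact Finset.disjoint_left.1 dpq hx (by rw [hh]; exact hxA)
    have hdqB : Disjoint q B := hAB.mono_left Finset.inter_subset_left
    have hIqB : v.I q B = 0 := zero_of_memP hPv hqne hB hdqB
      (minimal_sub_mem hmin hqne hB hdqB (hq ▸ Finset.inter_subset_left) subset_rfl hqA)
    have hK := I_K v B q p
    have e1 : B ∪ q = D := by rw [heB, Finset.union_comm, eD]
    have e2 : q ∪ p = A := by rw [Finset.union_comm, eA]
    have hIBq : v.I B q = 0 := by rw [I_comm]; exact hIqB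
    rw [e1, e2, hIBq] at hK
    have h1 : v.I D p = 0 := by rw [← heC, I_comm]; exact hICD
    have h2 : 0 ≤ v.I q p := hv q p hqne hpne dpq.symm
    have h3 : 0 ≤ v.I B A := hv B A hB hA hAB.symm
    have h4 : v.I A B = v.I B A := I_comm v A B
    exact finish (by linarith)
  rcases s.eq_empty_or_nonempty with hse | hsne
  · -- s = ∅ : B = r, D = q
    have heB : B = r := by rw [← eB, hse, Finset.union_empty]
    have heD : D = q := by rw [← eD, hse, Finset.union_empty]
    have hpA : ¬(p = A ∧ B = B) := by
      rintro ⟨hh, -⟩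
      obtain ⟨x, hx⟩ := hqne
      have hxA : x ∈ A := by rw [← eA]; exact Finset.mem_union_right p hx
      exact Finset.disjoint_left.1 dpq (by rw [hh]; exact hxA) hx
    have hdpB : Disjoint p B := hAB.mono_left Finset.inter_subset_left
    have hIpB : v.I p B = 0 := zero_of_memP hPv hpne hB hdpB
      (minimal_sub_mem hmin hpne hB hdpB (hp ▸ Finset.inter_subset_left) subset_rfl hpA)
    have hK := I_K v B p q
    have e1 : B ∪ p = C := by rw [heB, Finset.union_comm, eC]
    have e2 : p ∪ q = A := eA
    have hIBp : v.I B p = 0 := by rw [I_comm]; exact hIpB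
    rw [e1, e2, hIBp] at hK
    have h1 : v.I C q = 0 := by rw [← heD]; exact hICD
    have h2 : 0 ≤ v.I p q := hv p q hpne hqne dpq
    have h3 : 0 ≤ v.I B A := hv B A hB hA hAB.symm
    have h4 : v.I A B = v.I B A := I_comm v A B
    exact finish (by linarith)
  -- main case: all four pieces nonempty
  have hIpq : v.I p q = 0 := zero_of_memP hPv hpne hqne dpq
    (downset_mem hds hpne hqne dpq (hp ▸ Finset.inter_subset_right)
      (hq ▸ Finset.inter_subset_right) hCDP)
  have hIrs : v.I r s = 0 := zero_of_memP hPv hrne hsne drs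
    (downset_mem hds hrne hsne drs (hr ▸ Finset.inter_subset_right)
      (hs ▸ Finset.inter_subset_right) hCDP)
  have hIpr : v.I p r = 0 := zero_of_memP hPv hpne hrne dpr
    (minimal_sub_mem hmin hpne hrne dpr (hp ▸ Finset.inter_subset_left)
      (hr ▸ Finset.inter_subset_left)
      (by rintro ⟨hh, -⟩
          obtain ⟨x, hx⟩ := hqne
          have hxA : x ∈ A := by rw [← eA]; exact Finset.mem_union_right p hx
          exact Finset.disjoint_left.1 dpq (by rw [hh]; exact hxA) hx))
  have hIqs : v.I q s = 0 := zero_of_memP hPv hqne hsne dqs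
    (minimal_sub_mem hmin hqne hsne dqs (hq ▸ Finset.inter_subset_left)
      (hs ▸ Finset.inter_subset_left)
      (by rintro ⟨hh, -⟩
          obtain ⟨x, hx⟩ := hpne
          have hxA : x ∈ A := by rw [← eA]; exact Finset.mem_union_left q hx
          exact Finset.disjoint_left.1 dpq hx (by rw [hh]; exact hxA)))
  have hSA : v.S A = v.S p + v.S q := by
    have := hIpq; unfold EntropyVec.I at this; rw [eA] at this; linarith
  have hSB : v.S B = v.S r + v.S s := by
    have := hIrs; unfold EntropyVec.I at this; rw [eB] at this; linarith
  have hSC : v.S C = v.S p + v.S r := by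
    have := hIpr; unfold EntropyVec.I at this; rw [eC] at this; linarith
  have hSD : v.S D = v.S q + v.S s := by
    have := hIqs; unfold EntropyVec.I at this; rw [eD] at this; linarith
  have hSU : v.S (A ∪ B) = v.S C + v.S D := by
    have := hICD; unfold EntropyVec.I at this; rw [hU] at this; linarith
  exact finish (by unfold EntropyVec.I; rw [hSA, hSB, hSU, hSC, hSD]; ring)

/-- Lemma F: the union of two intersecting positive subsystems is positive. -/
lemma pos_union {P : Set (MI N)} (hds : IsMIDownSet P) {Z₁ Z₂ : PSet N}
    (h1 : BPos P Z₁) (h2 : BPos P Z₂) (hi : (Z₁ ∩ Z₂).Nonempty) :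
    BPos P (Z₁ ∪ Z₂) := by
  rintro m ⟨A, B, rfl, hA, hB, hAB, hU⟩ hP
  -- each positive Zᵢ is contained in A or in B
  have key : ∀ Z : PSet N, BPos P Z → Z ⊆ Z₁ ∪ Z₂ → Z ⊆ A ∨ Z ⊆ B := by
    intro Z hZpos hZU
    by_cases hZA : (Z ∩ A).Nonempty
    · by_cases hZB : (Z ∩ B).Nonempty
      · exfalso
        have hdisj : Disjoint (Z ∩ A) (Z ∩ B) :=
          hAB.mono Finset.inter_subset_right Finset.inter_subset_right
        have hmem : s(Z ∩ A, Z ∩ B) ∈ betaSet Z := by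
          refine mem_beta_mk hZA hZB hdisj ?_
          rw [← Finset.inter_union_distrib_left, hU]
          exact Finset.inter_eq_left.2 (hU ▸ hZU)
        exact hZpos _ hmem
          (downset_mem hds hZA hZB hdisj Finset.inter_subset_right
            Finset.inter_subset_right hP)
      · left
        intro x hx
        rcases Finset.mem_union.1 (hU ▸ hZU hx) with h | h
        · exact h
        · exact absurd ⟨x, Finset.mem_inter.2 ⟨hx, h⟩⟩ hZB
    · right
      intro x hx
      rcases Finset.mem_union.1 (hU ▸ hZU hx) with h | h
      · exact absurd ⟨x, Finset.mem_inter.2 ⟨hx, h⟩⟩ hZA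
      · exact h
  obtain ⟨x, hx⟩ := hi
  have hx1 : x ∈ Z₁ := (Finset.mem_inter.1 hx).1
  have hx2 : x ∈ Z₂ := (Finset.mem_inter.1 hx).2
  rcases key Z₁ h1 Finset.subset_union_left with hZ1 | hZ1 <;>
    rcases key Z₂ h2 Finset.subset_union_right with hZ2 | hZ2
  · obtain ⟨y, hy⟩ := hB
    have : y ∈ Z₁ ∪ Z₂ := hU ▸ Finset.mem_union_right A hy
    rcases Finset.mem_union.1 this with h | h
    · exact Finset.disjoint_left.1 hAB (hZ1 h) hy
    · exact Finset.disjoint_left.1 hAB (hZ2 h) hy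
  · exact Finset.disjoint_left.1 hAB (hZ1 hx1) (hZ2 hx2)
  · exact Finset.disjoint_left.1 hAB (hZ2 hx2) (hZ1 hx1)
  · obtain ⟨y, hy⟩ := hA
    have : y ∈ Z₁ ∪ Z₂ := hU ▸ Finset.mem_union_left B hy
    rcases Finset.mem_union.1 this with h | h
    · exact Finset.disjoint_left.1 hAB hy (hZ1 h)
    · exact Finset.disjoint_left.1 hAB hy (hZ2 h)

lemma posBelow_finite (P : Set (MI N)) (Y : PSet N) : (posBelow P Y).Finite := by
  apply Set.Finite.subset (Y.powerset : Finset (PSet N)).finite_toSet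
  intro Z hZ
  simp only [Finset.coe_powerset, Set.mem_preimage, Set.mem_powerset_iff,
    Finset.coe_subset, Finset.mem_coe, Finset.mem_powerset]
  exact hZ.1.subset

lemma maxPosBelow_finite (P : Set (MI N)) (Y : PSet N) :
    (maxPosBelow P Y).Finite :=
  (posBelow_finite P Y).subset fun _ h => h.1

/-- Every element of `pos_<(Y)` lies below a maximal one. -/
lemma exists_max {P : Set (MI N)} {Y Z : PSet N} (h : Z ∈ posBelow P Y) :
    ∃ Z', Z ⊆ Z' ∧ Z' ∈ maxPosBelow P Y := by
  set t : Set (PSet N) := {Z' | Z' ∈ posBelow P Y ∧ Z ⊆ Z'} with ht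
  have htfin : t.Finite := (posBelow_finite P Y).subset fun _ h => h.1
  have htne : t.Nonempty := ⟨Z, h, subset_rfl⟩
  obtain ⟨W, hW, hWmax⟩ := htfin.exists_maximalFor Finset.card t htne
  refine ⟨W, hW.2, hW.1, ?_⟩
  intro Z' hZ' hWZ'
  have hZ't : Z' ∈ t := ⟨hZ', hW.2.trans hWZ'⟩
  have hcard := hWmax hZ't (Finset.card_le_card hWZ')
  exact Finset.eq_of_subset_of_card_le hWZ' hcard

/-- Fact G: distinct intersecting maximal elements union to `Y`. -/
lemma max_inter_union {P : Set (MI N)} (hds : IsMIDownSet P) {Y Z₁ Z₂ : PSet N}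
    (h1 : Z₁ ∈ maxPosBelow P Y) (h2 : Z₂ ∈ maxPosBelow P Y) (hne : Z₁ ≠ Z₂)
    (hi : (Z₁ ∩ Z₂).Nonempty) : Z₁ ∪ Z₂ = Y := by
  have hpos : BPos P (Z₁ ∪ Z₂) := pos_union hds h1.1.2.2 h2.1.2.2 hi
  have hsub : Z₁ ∪ Z₂ ⊆ Y := Finset.union_subset h1.1.1.subset h2.1.1.subset
  by_contra hne'
  have hmem : Z₁ ∪ Z₂ ∈ posBelow P Y := by
    refine ⟨⟨hsub, fun hYs => hne' (le_antisymm hsub hYs)⟩, ?_, hpos⟩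
    calc 2 ≤ Z₁.card := h1.1.2.1
    _ ≤ (Z₁ ∪ Z₂).card := Finset.card_le_card Finset.subset_union_left
  have e1 := h1.2 _ hmem Finset.subset_union_left
  have : Z₂ ⊆ Z₁ := by rw [e1]; exact Finset.subset_union_right
  exact hne (h2.2 _ h1.1 this).symm

/-- If a split of `Y` is in `P̄` but not minimal, then some maximal positive proper
subsystem splits it. -/
lemma descend_proper {P : Set (MI N)} {v : EntropyVec N} (hv : v.InSAC)
    (hPv : P = v.PMI) (hds : IsMIDownSet P) {Y A B : PSet N}
    (hA : A.Nonempty) (hB : B.Nonempty) (hd : Disjoint A B) (hU : A ∪ B = Y)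
    (hnP : s(A, B) ∉ P) (hnm : s(A, B) ∉ minimalMI P) :
    ∃ Z ∈ maxPosBelow P Y, (Z ∩ A).Nonempty ∧ (Z ∩ B).Nonempty := by
  -- extract a strictly smaller instance in P̄
  have : ∃ U V : PSet N, U ⊆ A ∧ V ⊆ B ∧ U.Nonempty ∧ V.Nonempty ∧
      Disjoint U V ∧ ¬(U = A ∧ V = B) ∧ s(U, V) ∉ P := by
    by_contra hcon
    push_neg at hcon
    refine hnm ⟨isInst_mk hA hB hd, hnP, ?_⟩
    intro m' hm' hm'P hle
    obtain ⟨U, V, U', V', hm'e, hme, h1, h2⟩ := hle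
    obtain ⟨hU', hV', hUV⟩ := inst_props (hm'e ▸ hm')
    rcases Sym2.eq_iff.1 hme with ⟨rfl, rfl⟩ | ⟨rfl, rfl⟩
    · by_cases he : U = A ∧ V = B
      · rw [hm'e, he.1, he.2]
      · exact absurd (hcon U V h1 h2 hU' hV' hUV (fun e1 e2 => he ⟨e1, e2⟩))
          (by simpa [hm'e] using hm'P)
    · by_cases he : V = A ∧ U = B
      · rw [hm'e, he.1, he.2, Sym2.eq_swap]
      · have hsw : s(V, U) = m' := by rw [hm'e, Sym2.eq_swap]
        exact absurd (hcon V U h2 h1 hV' hU' hUV.symm (fun e1 e2 => he ⟨e1, e2⟩))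
          (by rw [hsw]; exact hm'P)
  obtain ⟨U, V, hUA, hVB, hUne, hVne, hUV, hne, hUVP⟩ := this
  have hproper : U ∪ V ≠ Y := by
    intro he
    have hAU : A ⊆ U := by
      intro x hx
      rcases Finset.mem_union.1 (he ▸ (hU ▸ Finset.mem_union_left B hx : x ∈ Y)) with h | h
      · exact h
      · exact absurd hx (Finset.disjoint_right.1 hd (hVB h))
    have hBV : B ⊆ V := by
      intro x hx
      rcases Finset.mem_union.1 (he ▸ (hU ▸ Finset.mem_union_right A hx : x ∈ Y)) with h | h
      · exact absurd hx (Finset.disjoint_left.1 hd (hUA h))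
      · exact h
    exact hne ⟨le_antisymm hUA hAU, le_antisymm hVB hBV⟩
  obtain ⟨E, F, hEU, hFV, hEne, hFne, hEF, hEFmin⟩ :=
    exists_minimal_le (U.card + V.card) U V le_rfl hUne hVne hUV hUVP
  have hWpos : BPos P (E ∪ F) := minimal_union_pos hv hPv hds hEFmin
  have hWY : E ∪ F ∈ posBelow P Y := by
    refine ⟨?_, ?_, hWpos⟩
    · refine Finset.ssubset_iff_subset_ne.2 ⟨?_, ?_⟩
      · exact (Finset.union_subset ((hEU.trans hUA).trans (hU ▸ Finset.subset_union_left))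
          ((hFV.trans hVB).trans (hU ▸ Finset.subset_union_right)))
      · intro he
        apply hproper
        apply le_antisymm (Finset.union_subset (hUA.trans (hU ▸ Finset.subset_union_left))
          (hVB.trans (hU ▸ Finset.subset_union_right)))
        rw [← he]
        exact Finset.union_subset_union hEU hFV
    · rw [Finset.card_union_of_disjoint hEF]
      have h1 : 1 ≤ E.card := Finset.card_pos.2 hEne
      have h2 : 1 ≤ F.card := Finset.card_pos.2 hFne
      omega
  obtain ⟨Z, hWZ, hZmax⟩ := exists_max hWY
  refine ⟨Z, hZmax, ?_, ?_⟩
  · obtain ⟨x, hx⟩ := hEne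
    exact ⟨x, Finset.mem_inter.2 ⟨hWZ (Finset.mem_union_left F hx), hUA (hEU hx)⟩⟩
  · obtain ⟨x, hx⟩ := hFne
    exact ⟨x, Finset.mem_inter.2 ⟨hWZ (Finset.mem_union_right E hx), hVB (hFV hx)⟩⟩

lemma split_singleton {Z : PSet N} {z : Party N} (hz : z ∈ Z) (hcard : 2 ≤ Z.card) :
    (Z.erase z).Nonempty ∧ Disjoint ({z} : PSet N) (Z.erase z) ∧
      ({z} : PSet N) ∪ Z.erase z = Z := by
  refine ⟨?_, ?_, ?_⟩
  · rw [← Finset.card_pos, Finset.card_erase_of_mem hz]; omega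
  · exact Finset.disjoint_singleton_left.2 (Finset.notMem_erase z Z)
  · ext x; simp only [Finset.mem_union, Finset.mem_singleton, Finset.mem_erase]
    constructor
    · rintro (rfl | ⟨-, h⟩) <;> [exact hz; exact h]
    · intro h
      by_cases hxz : x = z
      · exact Or.inl hxz
      · exact Or.inr ⟨hxz, h⟩

/-- Part (i), forward direction. -/
lemma L1_to_R1 {P : Set (MI N)} (hds : IsMIDownSet P) {Y : PSet N}
    (h : BVan P Y ∨ BCEss P Y) : maxPosBelow P Y = ∅ := by
  rw [Set.eq_empty_iff_forall_notMem]
  intro Z hZ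
  obtain ⟨⟨hZY, hcard, hpos⟩, -⟩ := hZ
  obtain ⟨z, hz⟩ := Finset.card_pos.1 (by omega : 0 < Z.card)
  obtain ⟨hvne, hdzv, hzv⟩ := split_singleton hz hcard
  have hzs : ({z} : PSet N).Nonempty := Finset.singleton_nonempty z
  set vv := Z.erase z with hvv
  have hznY : z ∉ Y \ Z := fun h => (Finset.mem_sdiff.1 h).2 hz
  have hdbig : Disjoint ({z} : PSet N) (vv ∪ Y \ Z) := by
    rw [Finset.disjoint_union_right]
    exact ⟨hdzv, Finset.disjoint_singleton_left.2 hznY⟩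
  have hbigne : (vv ∪ Y \ Z).Nonempty := hvne.mono Finset.subset_union_left
  have hbigU : ({z} : PSet N) ∪ (vv ∪ Y \ Z) = Y := by
    rw [← Finset.union_assoc, hzv, Finset.union_sdiff_of_subset hZY.subset]
  have hbigβ : s({z}, vv ∪ Y \ Z) ∈ betaSet Y := mem_beta_mk hzs hbigne hdbig hbigU
  have hsmallβ : s({z}, vv) ∈ betaSet Z := mem_beta_mk hzs hvne hdzv hzv
  obtain ⟨w, hwY, hwZ⟩ := Finset.exists_of_ssubset hZY
  have hwbig : w ∈ vv ∪ Y \ Z :=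
    Finset.mem_union_right vv (Finset.mem_sdiff.2 ⟨hwY, hwZ⟩)
  rcases h with hvan | hcess
  · exact hpos _ hsmallβ
      (downset_mem hds hzs hvne hdzv subset_rfl Finset.subset_union_left (hvan hbigβ))
  · have hmin := hcess hbigβ
    have := hmin.2.2 _ (isInst_mk hzs hvne hdzv) (hpos _ hsmallβ)
      (MIle_mk subset_rfl Finset.subset_union_left)
    rcases Sym2.eq_iff.1 this with ⟨-, hveq⟩ | ⟨hzeq, hveq⟩
    · have : w ∈ vv := hveq ▸ hwbig
      exact hwZ (Finset.mem_of_mem_erase this)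
    · have : w ∈ ({z} : PSet N) := hzeq ▸ hwbig
      exact hwZ (Finset.mem_singleton.1 this ▸ hz)

/-- A proper positive subsystem lies on one side of any minimal split of `Y`. -/
lemma pos_sub_side {P : Set (MI N)} {Y Z A B : PSet N}
    (hmin : s(A, B) ∈ minimalMI P) (hU : A ∪ B = Y) (hZ : Z ∈ posBelow P Y) :
    Z ⊆ A ∨ Z ⊆ B := by
  obtain ⟨hA, hB, hAB⟩ := inst_props hmin.1
  obtain ⟨hZY, hcard, hpos⟩ := hZ
  have hZsub : Z ⊆ A ∪ B := hU ▸ hZY.subset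
  by_cases hZA : (Z ∩ A).Nonempty
  · by_cases hZB : (Z ∩ B).Nonempty
    · exfalso
      have hdisj : Disjoint (Z ∩ A) (Z ∩ B) :=
        hAB.mono Finset.inter_subset_right Finset.inter_subset_right
      have hβ : s(Z ∩ A, Z ∩ B) ∈ betaSet Z := by
        refine mem_beta_mk hZA hZB hdisj ?_
        rw [← Finset.inter_union_distrib_left]
        exact Finset.inter_eq_left.2 hZsub
      have := hmin.2.2 _ (isInst_mk hZA hZB hdisj) (hpos _ hβ)
        (MIle_mk Finset.inter_subset_right Finset.inter_subset_right)
      rcases Sym2.eq_iff.1 this with ⟨h1, h2⟩ | ⟨h1, h2⟩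
      · have hAZ : A ⊆ Z := fun x hx => (Finset.mem_inter.1 (h1 ▸ hx)).1
        have hBZ : B ⊆ Z := fun x hx => (Finset.mem_inter.1 (h2 ▸ hx)).1
        have : Y ⊆ Z := hU ▸ Finset.union_subset hAZ hBZ
        exact (Finset.ssubset_iff_subset_ne.1 hZY).2 (le_antisymm hZY.subset this)
      · obtain ⟨x, hx⟩ := hB
        have : x ∈ Z ∩ A := h1 ▸ hx
        exact Finset.disjoint_right.1 hAB hx (Finset.mem_inter.1 this).2
    · left
      intro x hx
      rcases Finset.mem_union.1 (hZsub hx) with h | h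
      · exact h
      · exact absurd ⟨x, Finset.mem_inter.2 ⟨hx, h⟩⟩ hZB
  · right
    intro x hx
    rcases Finset.mem_union.1 (hZsub hx) with h | h
    · exact absurd ⟨x, Finset.mem_inter.2 ⟨hx, h⟩⟩ hZA
    · exact h

/-- Part (ii), forward direction: nonemptiness of `Max(pos_<(Y))`. -/
lemma L2_nonempty {P : Set (MI N)} {v : EntropyVec N} (hv : v.InSAC)
    (hPv : P = v.PMI) (hds : IsMIDownSet P) {Y : PSet N}
    (h : (BEss P Y ∧ ¬ BCEss P Y) ∨ BPart P Y) : (maxPosBelow P Y).Nonempty := by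
  rcases h with ⟨⟨m0, h0β, h0min⟩, hnce⟩ | ⟨⟨m0, h0β, h0P⟩, ⟨m1, h1β, h1P⟩⟩
  · obtain ⟨A, B, rfl, hA, hB, hAB, hU⟩ := h0β
    have hposY : BPos P Y := hU ▸ minimal_union_pos hv hPv hds h0min
    obtain ⟨m1, h1β, h1nmin⟩ := Set.not_subset.1 hnce
    have h1P : m1 ∉ P := hposY _ h1β
    obtain ⟨C, D, rfl, hC, hD, hCD, hU'⟩ := h1β
    obtain ⟨Z, hZ, -, -⟩ := descend_proper hv hPv hds hC hD hCD hU' h1P h1nmin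
    exact ⟨Z, hZ⟩
  · obtain ⟨C, D, rfl, hC, hD, hCD, hU'⟩ := h1β
    by_cases hmin : s(C, D) ∈ minimalMI P
    · have hposY : BPos P Y := hU' ▸ minimal_union_pos hv hPv hds hmin
      exact absurd h0P (hposY _ h0β)
    · obtain ⟨Z, hZ, -, -⟩ := descend_proper hv hPv hds hC hD hCD hU' h1P hmin
      exact ⟨Z, hZ⟩

/-- Part (ii), forward direction: pairwise disjointness. -/
lemma L2_disjoint {P : Set (MI N)} (hds : IsMIDownSet P) {Y : PSet N}
    (h : (BEss P Y ∧ ¬ BCEss P Y) ∨ BPart P Y) :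
    ∀ Z₁ ∈ maxPosBelow P Y, ∀ Z₂ ∈ maxPosBelow P Y, Z₁ ≠ Z₂ → Z₁ ∩ Z₂ = ∅ := by
  intro Z₁ h1 Z₂ h2 hne
  by_contra hcon
  have hi : (Z₁ ∩ Z₂).Nonempty := Finset.nonempty_iff_ne_empty.2 hcon
  have hUY : Z₁ ∪ Z₂ = Y := max_inter_union hds h1 h2 hne hi
  have hposY : BPos P Y := hUY ▸ pos_union hds h1.1.2.2 h2.1.2.2 hi
  rcases h with ⟨⟨m0, h0β, h0min⟩, -⟩ | ⟨⟨m0, h0β, h0P⟩, -⟩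
  · obtain ⟨A, B, rfl, hA, hB, hAB, hU⟩ := h0β
    obtain ⟨x, hx⟩ := hi
    have hx1 := (Finset.mem_inter.1 hx).1
    have hx2 := (Finset.mem_inter.1 hx).2
    rcases pos_sub_side h0min hU h1.1 with hs1 | hs1 <;>
      rcases pos_sub_side h0min hU h2.1 with hs2 | hs2
    · obtain ⟨y, hy⟩ := hB
      have : y ∈ Z₁ ∪ Z₂ := hUY.symm ▸ (hU ▸ Finset.mem_union_right A hy)
      rcases Finset.mem_union.1 this with hh | hh
      · exact Finset.disjoint_left.1 hAB (hs1 hh) hy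
      · exact Finset.disjoint_left.1 hAB (hs2 hh) hy
    · exact Finset.disjoint_left.1 hAB (hs1 hx1) (hs2 hx2)
    · exact Finset.disjoint_left.1 hAB (hs2 hx2) (hs1 hx1)
    · obtain ⟨y, hy⟩ := hA
      have : y ∈ Z₁ ∪ Z₂ := hUY.symm ▸ (hU ▸ Finset.mem_union_left B hy)
      rcases Finset.mem_union.1 this with hh | hh
      · exact Finset.disjoint_left.1 hAB hy (hs1 hh)
      · exact Finset.disjoint_left.1 hAB hy (hs2 hh)
  · exact hposY _ h0β h0P

/-- Part (iii), forward direction. -/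
lemma L3_to_R3 {P : Set (MI N)} {v : EntropyVec N} (hv : v.InSAC)
    (hPv : P = v.PMI) (hds : IsMIDownSet P) {Y : PSet N} (hY : 2 ≤ Y.card)
    (hpos : BPos P Y) (hness : BNEss P Y) :
    2 ≤ (maxPosBelow P Y).ncard ∧
      ∀ Z₁ ∈ maxPosBelow P Y, ∀ Z₂ ∈ maxPosBelow P Y, Z₁ ≠ Z₂ →
        (Z₁ ∩ Z₂).Nonempty ∧ Z₁ ∪ Z₂ = Y := by
  have star : ∀ A B : PSet N, A.Nonempty → B.Nonempty → Disjoint A B → A ∪ B = Y →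
      ∃ Z ∈ maxPosBelow P Y, (Z ∩ A).Nonempty ∧ (Z ∩ B).Nonempty := by
    intro A B hA hB hd hU
    exact descend_proper hv hPv hds hA hB hd hU
      (hpos _ (mem_beta_mk hA hB hd hU)) (fun hm => hness _ (mem_beta_mk hA hB hd hU) hm)
  have hinter : ∀ Z₁ ∈ maxPosBelow P Y, ∀ Z₂ ∈ maxPosBelow P Y, Z₁ ≠ Z₂ →
      (Z₁ ∩ Z₂).Nonempty := by
    intro Z₁ h1 Z₂ h2 hne
    by_contra hdis
    have hZ1Y : Z₁ ⊂ Y := h1.1.1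
    have hZ1ne : Z₁.Nonempty := Finset.card_pos.1 (by have := h1.1.2.1; omega)
    obtain ⟨w, hwY, hwZ⟩ := Finset.exists_of_ssubset hZ1Y
    have hBne : (Y \ Z₁).Nonempty := ⟨w, Finset.mem_sdiff.2 ⟨hwY, hwZ⟩⟩
    obtain ⟨Z₃, h3, hi31, hi3B⟩ := star Z₁ (Y \ Z₁) hZ1ne hBne Finset.disjoint_sdiff
      (Finset.union_sdiff_of_subset hZ1Y.subset)
    have h31ne : Z₃ ≠ Z₁ := by
      obtain ⟨x, hx⟩ := hi3B
      obtain ⟨hx3, hxB⟩ := Finset.mem_inter.1 hx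
      intro he
      exact (Finset.mem_sdiff.1 hxB).2 (he ▸ hx3)
    have hi13 : (Z₃ ∩ Z₁).Nonempty := hi31
    have hU31 : Z₃ ∪ Z₁ = Y := max_inter_union hds h3 h1 h31ne hi13
    have hZ23 : Z₂ ⊆ Z₃ := by
      intro x hx
      have hxY : x ∈ Y := h2.1.1.subset hx
      rcases Finset.mem_union.1 (hU31 ▸ hxY : x ∈ Z₃ ∪ Z₁) with h | h
      · exact h
      · exact absurd ⟨x, Finset.mem_inter.2 ⟨h, hx⟩⟩ hdis
    have he23 : Z₂ = Z₃ := h2.2 _ h3.1 hZ23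
    obtain ⟨x, hx⟩ := hi31
    obtain ⟨hx3, hx1⟩ := Finset.mem_inter.1 hx
    exact hdis ⟨x, Finset.mem_inter.2 ⟨hx1, he23 ▸ hx3⟩⟩
  constructor
  · -- at least two maximal elements
    obtain ⟨y, hy⟩ := Finset.card_pos.1 (by omega : 0 < Y.card)
    obtain ⟨hvne, hdzv, hzv⟩ := split_singleton hy hY
    obtain ⟨Z, hZ, -, -⟩ := star {y} (Y.erase y) (Finset.singleton_nonempty y) hvne hdzv hzv
    obtain ⟨w, hwY, hwZ⟩ := Finset.exists_of_ssubset hZ.1.1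
    obtain ⟨hvne', hdzv', hzv'⟩ := split_singleton hwY hY
    obtain ⟨Z', hZ', hiw, -⟩ := star {w} (Y.erase w) (Finset.singleton_nonempty w)
      hvne' hdzv' hzv'
    have hwZ' : w ∈ Z' := by
      obtain ⟨x, hx⟩ := hiw
      obtain ⟨hx1, hx2⟩ := Finset.mem_inter.1 hx
      exact Finset.mem_singleton.1 hx2 ▸ hx1
    have : Z ≠ Z' := fun he => hwZ (he ▸ hwZ')
    exact (Set.one_lt_ncard_iff (maxPosBelow_finite P Y)).2 ⟨Z, Z', hZ, hZ', this⟩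
  · intro Z₁ h1 Z₂ h2 hne
    have hi := hinter Z₁ h1 Z₂ h2 hne
    exact ⟨hi, max_inter_union hds h1 h2 hne hi⟩

end Aux

/-- For every KC-PMI `P` and subsystem `Y` with `|Y| ≥ 2`, setting
`n := |Max(pos_<(Y))|`:
(i) `β(Y)` is vanishing or completely essential iff `Max(pos_<(Y)) = ∅`;
(ii) `β(Y)` is essential-but-not-completely-essential or partial iff `n = 1`, or
`n ≥ 2` and the elements of `Max(pos_<(Y))` are pairwise disjoint;
(iii) `β(Y)` is positive and non-essential iff `n ≥ 2` and any two distinct elements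
`Z_i, Z_j` of `Max(pos_<(Y))` satisfy `Z_i ∩ Z_j ≠ ∅` and `Z_i ∪ Z_j = Y`. -/
theorem statement10 {N : ℕ} (hN : 2 ≤ N) (P : Set (MI N)) (hP : IsKCPMI P)
    (Y : PSet N) (hY : 2 ≤ Y.card) :
    ((BVan P Y ∨ BCEss P Y) ↔ maxPosBelow P Y = ∅) ∧
    (((BEss P Y ∧ ¬ BCEss P Y) ∨ BPart P Y) ↔
      ((maxPosBelow P Y).ncard = 1 ∨
       (2 ≤ (maxPosBelow P Y).ncard ∧
        ∀ Z₁ ∈ maxPosBelow P Y, ∀ Z₂ ∈ maxPosBelow P Y, Z₁ ≠ Z₂ → Z₁ ∩ Z₂ = ∅))) ∧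
    ((BPos P Y ∧ BNEss P Y) ↔
      (2 ≤ (maxPosBelow P Y).ncard ∧
       ∀ Z₁ ∈ maxPosBelow P Y, ∀ Z₂ ∈ maxPosBelow P Y, Z₁ ≠ Z₂ →
         (Z₁ ∩ Z₂).Nonempty ∧ Z₁ ∪ Z₂ = Y)) := by
  obtain ⟨⟨v, hv, hPv⟩, hds⟩ := hP
  set M := maxPosBelow P Y with hM
  have hMfin : M.Finite := maxPosBelow_finite P Y
  -- the three left-hand sides
  set L1 := BVan P Y ∨ BCEss P Y with hL1
  set L2 := (BEss P Y ∧ ¬ BCEss P Y) ∨ BPart P Y with hL2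
  set L3 := BPos P Y ∧ BNEss P Y with hL3
  -- the three right-hand sides
  set R1 := M = ∅ with hR1
  set R2 := (M.ncard = 1 ∨ (2 ≤ M.ncard ∧
    ∀ Z₁ ∈ M, ∀ Z₂ ∈ M, Z₁ ≠ Z₂ → Z₁ ∩ Z₂ = ∅)) with hR2
  set R3 := (2 ≤ M.ncard ∧ ∀ Z₁ ∈ M, ∀ Z₂ ∈ M, Z₁ ≠ Z₂ →
    (Z₁ ∩ Z₂).Nonempty ∧ Z₁ ∪ Z₂ = Y) with hR3
  -- forward implications
  have i1 : L1 → R1 := fun h => L1_to_R1 hds h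
  have i2 : L2 → R2 := by
    intro h
    have hne := L2_nonempty hv hPv hds h
    have hdisj := L2_disjoint hds h
    have hpos : 0 < M.ncard := (Set.ncard_pos hMfin).2 hne
    by_cases h1 : M.ncard = 1
    · exact Or.inl h1
    · exact Or.inr ⟨by omega, hdisj⟩
  have i3 : L3 → R3 := fun h => L3_to_R3 hv hPv hds hY h.1 h.2
  -- exclusivity of the right-hand sides
  have d12 : R1 → ¬ R2 := by
    intro h
    have : M.ncard = 0 := by rw [h]; exact Set.ncard_empty _
    rintro (h1 | ⟨h2, -⟩) <;> omega
  have d13 : R1 → ¬ R3 := by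
    intro h
    have : M.ncard = 0 := by rw [h]; exact Set.ncard_empty _
    rintro ⟨h2, -⟩; omega
  have d23 : R2 → ¬ R3 := by
    rintro (h1 | ⟨-, hdisj⟩) ⟨h2, hint⟩
    · omega
    · obtain ⟨a, b, ha, hb, hab⟩ := (Set.one_lt_ncard_iff hMfin).1 (by omega)
      have he := hdisj a ha b hb hab
      have hne := (hint a ha b hb hab).1
      rw [he] at hne
      exact Finset.not_nonempty_empty hne
  -- exhaustiveness of the left-hand sides
  have hexh : L1 ∨ L2 ∨ L3 := by
    by_cases hvan : BVan P Y
    · exact Or.inl (Or.inl hvan)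
    by_cases hex : ∃ m ∈ betaSet Y, m ∈ P
    · refine Or.inr (Or.inl (Or.inr ⟨hex, ?_⟩))
      obtain ⟨m, hm, hmP⟩ := Set.not_subset.1 hvan
      exact ⟨m, hm, hmP⟩
    · push_neg at hex
      have hposY : BPos P Y := hex
      by_cases hce : BCEss P Y
      · exact Or.inl (Or.inr hce)
      by_cases hess : BEss P Y
      · exact Or.inr (Or.inl (Or.inl ⟨hess, hce⟩))
      · refine Or.inr (Or.inr ⟨hposY, ?_⟩)
        intro m hm hmmin
        exact hess ⟨m, hm, hmmin⟩
  -- assemble the three iffs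
  refine ⟨⟨i1, ?_⟩, ⟨i2, ?_⟩, ⟨i3, ?_⟩⟩
  · intro hR
    rcases hexh with h | h | h
    · exact h
    · exact absurd hR (fun hr => d12 hr (i2 h))
    · exact absurd hR (fun hr => d13 hr (i3 h))
  · intro hR
    rcases hexh with h | h | h
    · exact absurd (i1 h) (fun hr => (d12 hr) hR)
    · exact h
    · exact absurd (i3 h) (d23 hR)
  · intro hR
    rcases hexh with h | h | h
    · exact absurd (i1 h) (fun hr => (d13 hr) hR)
    · exact absurd (i2 h) (fun hr => (d23 hr) hR)
    · exact h

end HEC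
end

section
/- For every N ≥ 2, every KC-PMI P on N parties, and every subsystem Y with β(Y) positive and non-essential, there exists a finite sequence (X_1, X_2, …, X_r) of subsystems with r ≥ 2 such that each β(X_i) is essential, Y = X_1 ∪ ⋯ ∪ X_r, and for every i ∈ {2,…,r}, X_i ∩ (X_1 ∪ ⋯ ∪ X_{i−1}) ≠ ∅. -/
namespace HEC

/-!
Each bipartition `{U, Y \ U}` of a positive `Y` lies outside `P`, so below it in the MI-poset
there is a minimal element `{A', B'}` of `P̄` with `A' ⊆ U` and `B' ⊆ Y \ U`; its β-set
`β(A' ∪ B')` is essential and `A' ∪ B'` meets both blocks. Starting from one such set and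
repeatedly taking `U` to be the union covered so far, every new set overlaps the previous ones
and adds a new party, until `Y` is covered. A single set cannot cover `Y`, as `β(Y)` is
non-essential.
-/

section ChainCover

variable {α : Type*} [DecidableEq α] (p : Finset α → Prop) (Y : Finset α)

def ChainIn (f : ℕ → Finset α) (r : ℕ) : Prop :=
  ∀ i < r, p (f i) ∧ f i ⊆ Y ∧ (0 < i → (f i ∩ (Finset.range i).biUnion f).Nonempty)

variable {p Y}

lemma biUnion_range_update_of_le (f : ℕ → Finset α) (X : Finset α) {i r : ℕ} (hi : i ≤ r) :
    (Finset.range i).biUnion (Function.update f r X) = (Finset.range i).biUnion f :=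
  Finset.biUnion_congr rfl fun _ hj =>
    Function.update_of_ne (Finset.mem_range.1 hj |>.trans_le hi).ne _ _

lemma biUnion_range_succ_update (f : ℕ → Finset α) (X : Finset α) (r : ℕ) :
    (Finset.range (r + 1)).biUnion (Function.update f r X) = (Finset.range r).biUnion f ∪ X := by
  rw [Finset.range_add_one, Finset.biUnion_insert, Function.update_self,
    biUnion_range_update_of_le f X le_rfl, Finset.union_comm]

lemma ChainIn.biUnion_subset {f : ℕ → Finset α} {r : ℕ} (hf : ChainIn p Y f r) :
    (Finset.range r).biUnion f ⊆ Y :=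
  Finset.biUnion_subset.2 fun i hi => (hf i (Finset.mem_range.1 hi)).2.1

lemma ChainIn.update {f : ℕ → Finset α} {r : ℕ} (hf : ChainIn p Y f r) {X : Finset α}
    (hX : p X) (hXY : X ⊆ Y) (hmeet : (X ∩ (Finset.range r).biUnion f).Nonempty) :
    ChainIn p Y (Function.update f r X) (r + 1) := by
  intro i hi
  rcases (Nat.lt_succ_iff.1 hi).lt_or_eq with hir | rfl
  · rw [Function.update_of_ne hir.ne, biUnion_range_update_of_le f X hir.le]
    exact hf i hir
  · rw [Function.update_self, biUnion_range_update_of_le f X le_rfl]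
    exact ⟨hX, hXY, fun _ => hmeet⟩

theorem ChainIn.exists_cover
    (hext : ∀ U, U.Nonempty → U ⊂ Y → ∃ X ⊆ Y, p X ∧ (X ∩ U).Nonempty ∧ (X \ U).Nonempty)
    {f : ℕ → Finset α} {r : ℕ} (hf : ChainIn p Y f r)
    (hne : ((Finset.range r).biUnion f).Nonempty) :
    ∃ (r' : ℕ) (f' : ℕ → Finset α), ChainIn p Y f' r' ∧ (Finset.range r').biUnion f' = Y := by
  induction hn : (Y \ (Finset.range r).biUnion f).card using Nat.strong_induction_on
    generalizing r f with
  | _ n ih =>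
  set U := (Finset.range r).biUnion f
  rcases hf.biUnion_subset.eq_or_ssubset with hUY | hUY
  · exact ⟨r, f, hf, hUY⟩
  obtain ⟨X, hXY, hX, hXU, hXnew⟩ := hext U hne hUY
  have hunion := biUnion_range_succ_update f X r
  refine ih _ ?_ (hf.update hX hXY hXU) (hunion ▸ hne.mono Finset.subset_union_left) rfl
  rw [← hn, hunion]
  obtain ⟨x, hx⟩ := hXnew
  obtain ⟨hxX, hxU⟩ := Finset.mem_sdiff.1 hx
  refine Finset.card_lt_card <| (Finset.ssubset_iff_of_subset <|
    Finset.sdiff_subset_sdiff subset_rfl Finset.subset_union_left).2 ⟨x, ?_, ?_⟩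
  · exact Finset.mem_sdiff.2 ⟨hXY hxX, hxU⟩
  · exact fun hx => (Finset.mem_sdiff.1 hx).2 (Finset.mem_union_right _ hxX)

lemma biUnion_filter_fin_lt (f : ℕ → Finset α) {r k : ℕ} (hk : k ≤ r) :
    ((Finset.univ : Finset (Fin r)).filter (fun j : Fin r => (j : ℕ) < k)).biUnion (fun j => f j)
      = (Finset.range k).biUnion f := by
  ext x
  simp only [Finset.mem_biUnion, Finset.mem_filter, Finset.mem_univ, true_and, Finset.mem_range]
  exact ⟨fun ⟨j, hj, hx⟩ => ⟨j, hj, hx⟩, fun ⟨j, hj, hx⟩ => ⟨⟨j, hj.trans_le hk⟩, hj, hx⟩⟩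

lemma biUnion_univ_fin (f : ℕ → Finset α) (r : ℕ) :
    (Finset.univ : Finset (Fin r)).biUnion (fun j => f j) = (Finset.range r).biUnion f := by
  rw [← biUnion_filter_fin_lt f le_rfl, Finset.filter_true_of_mem fun j _ => j.isLt]

end ChainCover

section MinimalMI

variable {N : ℕ}

lemma isMIInst_mk_iff {A B : PSet N} :
    IsMIInst s(A, B) ↔ A.Nonempty ∧ B.Nonempty ∧ Disjoint A B := by
  refine ⟨fun ⟨C, D, h, hC, hD, hCD⟩ => ?_, fun h => ⟨A, B, rfl, h⟩⟩
  rcases Sym2.eq_iff.1 h with ⟨rfl, rfl⟩ | ⟨rfl, rfl⟩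
  exacts [⟨hC, hD, hCD⟩, ⟨hD, hC, hCD.symm⟩]

lemma MIle_mk_right_iff {m : MI N} {A B : PSet N} :
    MIle m s(A, B) ↔ ∃ C D : PSet N, m = s(C, D) ∧ C ⊆ A ∧ D ⊆ B := by
  refine ⟨fun ⟨C, D, A', B', hm, h, hC, hD⟩ => ?_, fun ⟨C, D, hm, hC, hD⟩ =>
    ⟨C, D, A, B, hm, rfl, hC, hD⟩⟩
  rcases Sym2.eq_iff.1 h with ⟨rfl, rfl⟩ | ⟨rfl, rfl⟩
  exacts [⟨C, D, hm, hC, hD⟩, ⟨D, C, hm.trans Sym2.eq_swap, hD, hC⟩]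

/-- A minimal pair `(A', B') ≤ (A, B)` of the product order with `{A', B'} ∉ P` is minimal in
`P̄` for the MI-poset order. -/
lemma exists_mk_le_mem_minimalMI (P : Set (MI N)) {A B : PSet N} (hA : A.Nonempty)
    (hB : B.Nonempty) (hAB : Disjoint A B) (hP : s(A, B) ∉ P) :
    ∃ A' ⊆ A, ∃ B' ⊆ B, s(A', B') ∈ minimalMI P := by
  let Q : PSet N × PSet N → Prop := fun q => q.1.Nonempty ∧ q.2.Nonempty ∧ s(q.1, q.2) ∉ P
  obtain ⟨⟨A', B'⟩, ⟨hA', hB'⟩, hmin⟩ := exists_minimal_le_of_wellFoundedLT Q (A, B) ⟨hA, hB, hP⟩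
  refine ⟨A', hA', B', hB', ⟨⟨A', B', rfl, hmin.1.1, hmin.1.2.1, hAB.mono hA' hB'⟩,
    hmin.1.2.2, fun m hm hmP hle => ?_⟩⟩
  obtain ⟨C, D, rfl, hC, hD⟩ := MIle_mk_right_iff.1 hle
  obtain ⟨hCne, hDne, -⟩ := isMIInst_mk_iff.1 hm
  obtain ⟨rfl, rfl⟩ := Prod.ext_iff.1 (hmin.eq_of_le (y := (C, D)) ⟨hCne, hDne, hmP⟩ ⟨hC, hD⟩)
  rfl

lemma BPos.exists_bEss_subset {P : Set (MI N)} {Y U : PSet N} (hpos : BPos P Y)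
    (hU : U.Nonempty) (hUY : U ⊂ Y) :
    ∃ X ⊆ Y, BEss P X ∧ (X ∩ U).Nonempty ∧ (X \ U).Nonempty := by
  have hYU : (Y \ U).Nonempty := Finset.sdiff_nonempty.2 (not_subset_of_ssubset hUY)
  obtain ⟨A, hA, B, hB, hmin⟩ := exists_mk_le_mem_minimalMI P hU hYU Finset.disjoint_sdiff
    (hpos _ ⟨U, Y \ U, rfl, hU, hYU, Finset.disjoint_sdiff, Finset.union_sdiff_of_subset hUY.1⟩)
  obtain ⟨hAne, hBne, hAB⟩ := isMIInst_mk_iff.1 hmin.1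
  refine ⟨A ∪ B, Finset.union_subset (hA.trans hUY.1) (hB.trans Finset.sdiff_subset),
    ⟨_, ⟨A, B, rfl, hAne, hBne, hAB, rfl⟩, hmin⟩, ?_, ?_⟩
  · exact hAne.mono (Finset.subset_inter Finset.subset_union_left hA)
  · exact hBne.mono fun x hx => Finset.mem_sdiff.2
      ⟨Finset.mem_union_right _ hx, (Finset.mem_sdiff.1 (hB hx)).2⟩

end MinimalMI

theorem statement11_general {N : ℕ} (P : Set (MI N))
    (Y : PSet N) (hY : 2 ≤ Y.card) (hpos : BPos P Y) (hness : BNEss P Y) :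
    ∃ (r : ℕ) (X : Fin r → PSet N), 2 ≤ r ∧
      (∀ i : Fin r, BEss P (X i)) ∧
      Y = (Finset.univ : Finset (Fin r)).biUnion X ∧
      (∀ i : Fin r, 0 < (i : ℕ) →
        ((X i) ∩ ((Finset.univ : Finset (Fin r)).filter
          (fun j : Fin r => (j : ℕ) < (i : ℕ))).biUnion X).Nonempty) := by
  obtain ⟨ℓ, hℓ⟩ := Finset.card_pos.1 (by omega : 0 < Y.card)
  have hℓY : {ℓ} ⊂ Y := Finset.ssubset_iff_subset_ne.2 ⟨Finset.singleton_subset_iff.2 hℓ,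
    fun h => by simp [← h] at hY⟩
  obtain ⟨X₀, hX₀Y, hX₀, hX₀ℓ, -⟩ := hpos.exists_bEss_subset (Finset.singleton_nonempty ℓ) hℓY
  have hstart : ChainIn (BEss P) Y (fun _ => X₀) 1 := fun i hi =>
    ⟨hX₀, hX₀Y, fun h => absurd hi (by omega)⟩
  obtain ⟨r, f, hf, hcover⟩ := hstart.exists_cover (fun U hU hUY => hpos.exists_bEss_subset hU hUY)
    (by simpa using hX₀ℓ.mono Finset.inter_subset_left)
  have hr : 2 ≤ r := by
    by_contra! hr
    interval_cases r
    · simp [← hcover] at hY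
    · obtain ⟨m, hm, hmA⟩ := (hf 0 one_pos).1
      exact hness m (by simpa [← hcover] using hm) hmA
  refine ⟨r, fun i => f i, hr, fun i => (hf i i.isLt).1, (hcover ▸ biUnion_univ_fin f r).symm,
    fun i hi => ?_⟩
  rw [biUnion_filter_fin_lt f i.isLt.le]
  exact (hf i i.isLt).2.2 hi

/-- For every KC-PMI `P` and subsystem `Y` with `β(Y)` positive and
non-essential, there is a sequence `(X_1, …, X_r)` of subsystems with `r ≥ 2`, each
`β(X_i)` essential, `Y = X_1 ∪ ⋯ ∪ X_r`, and for every `i ≥ 2`,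
`X_i ∩ (X_1 ∪ ⋯ ∪ X_{i−1}) ≠ ∅`. -/
theorem statement11 {N : ℕ} (hN : 2 ≤ N) (P : Set (MI N)) (hP : IsKCPMI P)
    (Y : PSet N) (hY : 2 ≤ Y.card) (hpos : BPos P Y) (hness : BNEss P Y) :
    ∃ (r : ℕ) (X : Fin r → PSet N), 2 ≤ r ∧
      (∀ i : Fin r, BEss P (X i)) ∧
      Y = (Finset.univ : Finset (Fin r)).biUnion X ∧
      (∀ i : Fin r, 0 < (i : ℕ) →
        ((X i) ∩ ((Finset.univ : Finset (Fin r)).filter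
          (fun j : Fin r => (j : ℕ) < (i : ℕ))).biUnion X).Nonempty) :=
  statement11_general P Y hY hpos hness

end HEC
end

section
/- For every N ≥ 2, every KC-PMI P on N parties, and every max-clique Q of the line graph L_{H_P} of the correlation hypergraph: (i) |Q^∩| ∈ {0, 1, 2}; (ii) if |Q^∩| > 0, then for every v_ℓ ∈ Q^∩ the sub-hypergraph H_{⟦N⟧∖{ℓ}} is disconnected; (iii) |Q^∩| = 2 if and only if H_P is disconnected and, writing Q^∩ = {v_{ℓ₁}, v_{ℓ₂}}, one of its connected components has vertex set exactly {v_{ℓ₁}, v_{ℓ₂}} and contains the hyperedge e_{{ℓ₁,ℓ₂}}. -/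
namespace HEC

/-!
Everything rests on two facts about hyperedges. A positive `I(Y:Z)` is witnessed by a hyperedge
crossing the cut `(Y, Z)`: descend to a minimal pair of subsystems with positive mutual
information, whose β-set is then positive. And since `P` is a down-set, two intersecting
hyperedges merge into a hyperedge. Consequently a hyperedge through one vertex of `Q^∩` belongs
to the max-clique `Q`, so it contains all of `Q^∩`.

If `a ≠ b` both lie in `Q^∩`, no hyperedge through `a` or `b` can leave `{a,b}`, so
`I(a : ⟦N⟧∖{a,b}) = I(b : ⟦N⟧∖{a,b}) = 0`; by purification this forces `S_{ab} = 0`. Then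
`I(a:b) > 0` makes `{a,b}` a hyperedge, and Araki–Lieb forbids any hyperedge strictly containing
it. This gives (i) and (iii). For (ii), a connected `H_{⟦N⟧∖{ℓ}}` would merge into the hyperedge
`⟦N⟧∖{ℓ}`, which meets every member of `Q` but misses `ℓ`.
-/

namespace EntropyVec

variable {N : ℕ} (v : EntropyVec N)

lemma I_comm (Y Z : PSet N) : v.I Y Z = v.I Z Y := by
  unfold I; rw [Finset.union_comm]; ring

lemma I_empty_left (Z : PSet N) : v.I ∅ Z = 0 := by
  simp [I, v.S_empty]

lemma I_empty_right (Y : PSet N) : v.I Y ∅ = 0 := by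
  simp [I, v.S_empty]

lemma S_univ_sdiff (Y : PSet N) : v.S (Finset.univ \ Y) = v.S Y := by
  by_cases h : (0 : Party N) ∈ Y
  · exact (v.S_purify Y h).symm
  · rw [v.S_purify _ (by simpa using h), Finset.sdiff_sdiff_eq_self (Finset.subset_univ Y)]

variable {v}

lemma nonempty_left_of_I_pos {Y Z : PSet N} (h : 0 < v.I Y Z) : Y.Nonempty := by
  rw [Finset.nonempty_iff_ne_empty]
  rintro rfl
  simp [v.I_empty_left] at h

lemma nonempty_right_of_I_pos {Y Z : PSet N} (h : 0 < v.I Y Z) : Z.Nonempty :=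
  nonempty_left_of_I_pos (v.I_comm Y Z ▸ h)

lemma I_nonneg (hv : v.InSAC) {Y Z : PSet N} (hd : Disjoint Y Z) : 0 ≤ v.I Y Z := by
  rcases Y.eq_empty_or_nonempty with rfl | hY
  · rw [v.I_empty_left]
  rcases Z.eq_empty_or_nonempty with rfl | hZ
  · rw [v.I_empty_right]
  exact hv Y Z hY hZ hd

lemma S_union_le (hv : v.InSAC) {Y Z : PSet N} (hd : Disjoint Y Z) :
    v.S (Y ∪ Z) ≤ v.S Y + v.S Z := by
  have := I_nonneg hv hd
  unfold I at this
  linarith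

/-- Araki–Lieb: subadditivity applied to `Y` and the purifier `⟦N⟧ ∖ (Y ∪ Z)`. -/
lemma S_le_S_union_add (hv : v.InSAC) {Y Z : PSet N} (hd : Disjoint Y Z) :
    v.S Z ≤ v.S (Y ∪ Z) + v.S Y := by
  set W := Finset.univ \ (Y ∪ Z)
  have hWY : W ∪ Y = Finset.univ \ Z := by
    ext x
    have : x ∈ Y → x ∉ Z := fun h => Finset.disjoint_left.mp hd h
    simp only [W, Finset.mem_union, Finset.mem_sdiff, Finset.mem_univ, true_and]
    tauto
  have := S_union_le hv (Finset.sdiff_disjoint.mono_right Finset.subset_union_left : Disjoint W Y)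
  rw [hWY, v.S_univ_sdiff, v.S_univ_sdiff] at this
  linarith

lemma I_le_two_mul_S_left (hv : v.InSAC) {Y Z : PSet N} (hd : Disjoint Y Z) :
    v.I Y Z ≤ 2 * v.S Y := by
  have := S_le_S_union_add hv hd
  unfold I
  linarith

lemma I_eq_zero_of_mem_PMI {P : Set (MI N)} (hP : P = v.PMI) {Y Z : PSet N}
    (h : s(Y, Z) ∈ P) : v.I Y Z = 0 := by
  obtain ⟨C, D, hCD, -, -, -, hI⟩ := hP ▸ h
  rcases Sym2.eq_iff.mp hCD with ⟨rfl, rfl⟩ | ⟨rfl, rfl⟩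
  · exact hI
  · rwa [v.I_comm]

lemma I_pos_of_BPos (hv : v.InSAC) {P : Set (MI N)} (hP : P = v.PMI) {X Y Z : PSet N}
    (hX : BPos P X) (hY : Y.Nonempty) (hZ : Z.Nonempty) (hd : Disjoint Y Z)
    (hU : Y ∪ Z = X) : 0 < v.I Y Z := by
  refine (hv Y Z hY hZ hd).lt_of_ne fun h => hX _ ⟨Y, Z, rfl, hY, hZ, hd, hU⟩ ?_
  exact hP ▸ ⟨Y, Z, rfl, hY, hZ, hd, h.symm⟩

lemma S_eq_add_of_forall_I_eq_zero {Y Z C : PSet N} (hC : C ⊂ Y ∪ Z)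
    (h : ∀ Y' ⊆ Y, ∀ Z' ⊆ Z, Y' ∪ Z' ⊂ Y ∪ Z → v.I Y' Z' = 0) :
    v.S C = v.S (C ∩ Y) + v.S (C ∩ Z) := by
  have hC' : C ∩ Y ∪ C ∩ Z = C := by
    rw [← Finset.inter_union_distrib_left, Finset.inter_eq_left.mpr hC.subset]
  have := h _ Finset.inter_subset_right _ Finset.inter_subset_right (hC' ▸ hC)
  unfold I at this
  rw [hC'] at this
  linarith

/-- Splitting a vanishing bipartition `{A,B}` of `Y ∪ Z` along `Y` and `Z` would give
`S_{Y∪Z} = S_A + S_B ≥ S_Y + S_Z`. -/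
lemma BPos_union_of_forall_I_eq_zero (hv : v.InSAC) {P : Set (MI N)} (hP : P = v.PMI)
    {Y Z : PSet N} (hI : 0 < v.I Y Z)
    (h : ∀ Y' ⊆ Y, ∀ Z' ⊆ Z, Y' ∪ Z' ⊂ Y ∪ Z → v.I Y' Z' = 0) : BPos P (Y ∪ Z) := by
  rintro _ ⟨A, B, rfl, hA, hB, hAB, hU⟩ hm
  have hIAB := I_eq_zero_of_mem_PMI hP hm
  have hAs : A ⊂ Y ∪ Z :=
    hU ▸ left_lt_sup.mpr fun h => hB.ne_empty (disjoint_self.mp (hAB.mono_left h))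
  have hBs : B ⊂ Y ∪ Z :=
    hU ▸ right_lt_sup.mpr fun h => hA.ne_empty (disjoint_self.mp (hAB.mono_right h))
  have hSA := S_eq_add_of_forall_I_eq_zero hAs h
  have hSB := S_eq_add_of_forall_I_eq_zero hBs h
  have hY : A ∩ Y ∪ B ∩ Y = Y := by
    rw [← Finset.union_inter_distrib_right, hU, Finset.union_inter_cancel_left]
  have hZ : A ∩ Z ∪ B ∩ Z = Z := by
    rw [← Finset.union_inter_distrib_right, hU, Finset.union_inter_cancel_right]
  have hSY := S_union_le hv (hAB.mono Finset.inter_subset_left Finset.inter_subset_left :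
    Disjoint (A ∩ Y) (B ∩ Y))
  have hSZ := S_union_le hv (hAB.mono Finset.inter_subset_left Finset.inter_subset_left :
    Disjoint (A ∩ Z) (B ∩ Z))
  rw [hY] at hSY
  rw [hZ] at hSZ
  unfold I at hI hIAB
  rw [hU] at hIAB
  linarith

end EntropyVec

section Hypergraph

open EntropyVec

variable {N : ℕ} {P : Set (MI N)} {v : EntropyVec N}

lemma exists_hedge_of_I_pos (hv : v.InSAC) (hP : P = v.PMI) {Y Z : PSet N}
    (hd : Disjoint Y Z) (hI : 0 < v.I Y Z) :
    ∃ e ∈ Hedge P, e ⊆ Y ∪ Z ∧ (e ∩ Y).Nonempty ∧ (e ∩ Z).Nonempty := by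
  induction hn : (Y ∪ Z).card using Nat.strong_induction_on generalizing Y Z with
  | _ n ih =>
  by_cases hmin : ∀ Y' ⊆ Y, ∀ Z' ⊆ Z, Y' ∪ Z' ⊂ Y ∪ Z → v.I Y' Z' = 0
  · have hY := nonempty_left_of_I_pos hI
    have hZ := nonempty_right_of_I_pos hI
    refine ⟨Y ∪ Z, ⟨?_, BPos_union_of_forall_I_eq_zero hv hP hI hmin⟩, subset_rfl, ?_, ?_⟩
    · rw [Finset.card_union_of_disjoint hd]
      linarith [hY.card_pos, hZ.card_pos]
    · rwa [Finset.union_inter_cancel_left]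
    · rwa [Finset.union_inter_cancel_right]
  · push Not at hmin
    obtain ⟨Y', hY', Z', hZ', hlt, hne⟩ := hmin
    have hd' := hd.mono hY' hZ'
    obtain ⟨e, he, heU, heY, heZ⟩ :=
      ih _ (hn ▸ Finset.card_lt_card hlt) hd' ((I_nonneg hv hd').lt_of_ne hne.symm) rfl
    exact ⟨e, he, heU.trans hlt.subset, heY.mono (Finset.inter_subset_inter_left hY'),
      heZ.mono (Finset.inter_subset_inter_left hZ')⟩

lemma S_singleton_pos_of_mem_hedge (hv : v.InSAC) (hP : P = v.PMI) {e : PSet N}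
    (he : e ∈ Hedge P) {a : Party N} (ha : a ∈ e) : 0 < v.S {a} := by
  obtain ⟨b, hb, hba⟩ := Finset.exists_mem_ne he.1 a
  have hd : Disjoint {a} (e \ {a}) := Finset.disjoint_sdiff
  have hI := I_pos_of_BPos hv hP he.2 (Finset.singleton_nonempty a)
    ⟨b, Finset.mem_sdiff.mpr ⟨hb, by simpa using hba⟩⟩ hd
    (Finset.union_sdiff_of_subset (Finset.singleton_subset_iff.mpr ha))
  linarith [I_le_two_mul_S_left hv hd]

lemma notMem_of_splits (hds : IsMIDownSet P) {g Y Z : PSet N} (hg : BPos P g)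
    (hgU : g ⊆ Y ∪ Z) (hY : (Y ∩ g).Nonempty) (hZ : (Z ∩ g).Nonempty) (hd : Disjoint Y Z) :
    s(Y, Z) ∉ P := by
  intro hm
  have hd' : Disjoint (Y ∩ g) (Z ∩ g) := hd.mono Finset.inter_subset_left Finset.inter_subset_left
  have hU : Y ∩ g ∪ Z ∩ g = g := by
    rw [← Finset.union_inter_distrib_right, Finset.inter_eq_right.mpr hgU]
  exact hg _ ⟨_, _, rfl, hY, hZ, hd', hU⟩ (hds _ _ ⟨_, _, rfl, hY, hZ, hd'⟩ hm
    ⟨_, _, Y, Z, rfl, rfl, Finset.inter_subset_left, Finset.inter_subset_left⟩)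

lemma splits_right_of_disjoint_left {Y Z e f : PSet N} (hU : Y ∪ Z = e ∪ f)
    (hY : Y.Nonempty) (hef : (e ∩ f).Nonempty) (hYe : Disjoint Y e) :
    (Y ∩ f).Nonempty ∧ (Z ∩ f).Nonempty := by
  obtain ⟨y, hy⟩ := hY
  obtain ⟨x, hx⟩ := hef
  rw [Finset.mem_inter] at hx
  have hyU : y ∈ e ∪ f := hU ▸ Finset.mem_union_left Z hy
  have hxU : x ∈ Y ∪ Z := hU ▸ Finset.mem_union_left f hx.1
  rw [Finset.mem_union] at hyU hxU
  refine ⟨⟨y, Finset.mem_inter.mpr ⟨hy, ?_⟩⟩, ⟨x, Finset.mem_inter.mpr ⟨?_, hx.2⟩⟩⟩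
  · exact hyU.resolve_left (Finset.disjoint_left.mp hYe hy)
  · exact hxU.resolve_left fun h => Finset.disjoint_left.mp hYe h hx.1

/-- Any bipartition of `e ∪ f` splits `e` or `f`, hence lies above an element of a positive
β-set. -/
lemma union_mem_hedge (hds : IsMIDownSet P) {e f : PSet N} (he : e ∈ Hedge P)
    (hf : f ∈ Hedge P) (hef : (e ∩ f).Nonempty) : e ∪ f ∈ Hedge P := by
  refine ⟨he.1.trans (Finset.card_le_card Finset.subset_union_left), ?_⟩
  rintro _ ⟨Y, Z, rfl, hY, hZ, hd, hU⟩
  by_cases hYe : Disjoint Y e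
  · obtain ⟨hYf, hZf⟩ := splits_right_of_disjoint_left hU hY hef hYe
    exact notMem_of_splits hds hf.2 (hU ▸ Finset.subset_union_right) hYf hZf hd
  by_cases hZe : Disjoint Z e
  · obtain ⟨hZf, hYf⟩ :=
      splits_right_of_disjoint_left (by rw [Finset.union_comm, hU]) hZ hef hZe
    rw [Sym2.eq_swap]
    refine notMem_of_splits hds hf.2 ?_ hZf hYf hd.symm
    rw [Finset.union_comm, hU]
    exact Finset.subset_union_right
  rw [Finset.not_disjoint_iff_nonempty_inter] at hYe hZe
  exact notMem_of_splits hds he.2 (hU ▸ Finset.subset_union_left) hYe hZe hd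

end Hypergraph

namespace IsMaxClique

variable {N : ℕ} {P : Set (MI N)} {Q : Set (PSet N)}

lemma mem_of_forall_inter_nonempty (hQ : IsMaxClique P Q) {X : PSet N} (hX : X ∈ Hedge P)
    (h : ∀ f ∈ Q, (X ∩ f).Nonempty) : X ∈ Q := by
  obtain ⟨-, ⟨hsub, hpair⟩, hmax⟩ := hQ
  have hcl : IsLineClique P (insert X Q) := by
    refine ⟨Set.insert_subset hX hsub, ?_⟩
    rintro e (rfl | he) f (rfl | hf) hef
    · exact absurd rfl hef
    · exact h f hf
    · rw [Finset.inter_comm]; exact h e he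
    · exact hpair e he f hf hef
  exact hmax _ hcl (Set.subset_insert X Q) ▸ Set.mem_insert X Q

lemma qInter_subset (hQ : IsMaxClique P Q) {X : PSet N} (hX : X ∈ Hedge P) {k : Party N}
    (hk : k ∈ qInter Q) (hkX : k ∈ X) : qInter Q ⊆ X := fun _ hℓ =>
  hℓ X (hQ.mem_of_forall_inter_nonempty hX fun f hf => ⟨k, Finset.mem_inter.mpr ⟨hkX, hk f hf⟩⟩)

end IsMaxClique

section CommonVertices

open EntropyVec

variable {N : ℕ} {P : Set (MI N)} {v : EntropyVec N} {Q : Set (PSet N)}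

/-- A positive `I({ℓ}:Z)` would give a hyperedge through `ℓ` inside `{ℓ} ∪ Z`, which must
contain all of `Q^∩`. -/
lemma I_singleton_eq_zero_of_mem_qInter (hv : v.InSAC) (hP : P = v.PMI)
    (hQ : IsMaxClique P Q) {ℓ k : Party N} (hℓ : ℓ ∈ qInter Q) (hk : k ∈ qInter Q)
    (hkℓ : k ≠ ℓ) {Z : PSet N} (hℓZ : ℓ ∉ Z) (hkZ : k ∉ Z) : v.I {ℓ} Z = 0 := by
  have hd : Disjoint {ℓ} Z := Finset.disjoint_singleton_left.mpr hℓZ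
  refine le_antisymm (not_lt.mp fun hI => ?_) (I_nonneg hv hd)
  obtain ⟨e, he, heU, heℓ, -⟩ := exists_hedge_of_I_pos hv hP hd hI
  have hℓe : ℓ ∈ e := by
    obtain ⟨x, hx⟩ := heℓ
    rw [Finset.mem_inter, Finset.mem_singleton] at hx
    exact hx.2 ▸ hx.1
  have hke := heU (hQ.qInter_subset he hℓ hℓe hk)
  simp only [Finset.mem_union, Finset.mem_singleton] at hke
  tauto

/-- With `W = ⟦N⟧ ∖ {a,b}`, purification turns `I({a}:W) = 0` and `I({b}:W) = 0` into
`S_a + S_{ab} = S_b` and `S_b + S_{ab} = S_a`. -/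
lemma S_pair_eq_zero (hv : v.InSAC) (hP : P = v.PMI) (hQ : IsMaxClique P Q) {a b : Party N}
    (ha : a ∈ qInter Q) (hb : b ∈ qInter Q) (hab : a ≠ b) : v.S {a, b} = 0 := by
  set W : PSet N := Finset.univ \ {a, b}
  have hIa := I_singleton_eq_zero_of_mem_qInter hv hP hQ ha hb hab.symm
    (Z := W) (by simp [W]) (by simp [W])
  have hIb := I_singleton_eq_zero_of_mem_qInter hv hP hQ hb ha hab
    (Z := W) (by simp [W]) (by simp [W])
  have hUa : {a} ∪ W = Finset.univ \ {b} := by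
    ext x; simp only [W, Finset.mem_union, Finset.mem_sdiff, Finset.mem_insert,
      Finset.mem_singleton, Finset.mem_univ, true_and]; grind
  have hUb : {b} ∪ W = Finset.univ \ {a} := by
    ext x; simp only [W, Finset.mem_union, Finset.mem_sdiff, Finset.mem_insert,
      Finset.mem_singleton, Finset.mem_univ, true_and]; grind
  unfold I at hIa hIb
  rw [hUa, S_univ_sdiff, S_univ_sdiff] at hIa
  rw [hUb, S_univ_sdiff, S_univ_sdiff] at hIb
  linarith

lemma pair_mem_hedge (hv : v.InSAC) (hP : P = v.PMI) (hQ : IsMaxClique P Q) {a b : Party N}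
    (ha : a ∈ qInter Q) (hb : b ∈ qInter Q) (hab : a ≠ b) : ({a, b} : PSet N) ∈ Hedge P := by
  have hd : Disjoint ({a} : PSet N) {b} := Finset.disjoint_singleton.mpr hab
  have hI : 0 < v.I {a} {b} := by
    unfold I
    rw [← Finset.insert_eq, S_pair_eq_zero hv hP hQ ha hb hab]
    obtain ⟨e, heQ⟩ := hQ.1
    have he := hQ.2.1.1 heQ
    linarith [S_singleton_pos_of_mem_hedge hv hP he (ha e heQ),
      S_singleton_pos_of_mem_hedge hv hP he (hb e heQ)]
  obtain ⟨e, he, heU, -, -⟩ := exists_hedge_of_I_pos hv hP hd hI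
  rw [← Finset.insert_eq] at heU
  rwa [← Finset.eq_of_subset_of_card_le heU ((Finset.card_pair hab).trans_le he.1)]

/-- For `e ⊋ {a,b}`, positivity of `β(e)` gives `I({a,b} : e ∖ {a,b}) > 0`, while
`I({a,b} : ·) ≤ 2 S_{ab} = 0`. -/
lemma eq_pair_of_mem_hedge (hv : v.InSAC) (hP : P = v.PMI) (hQ : IsMaxClique P Q)
    {a b : Party N} (ha : a ∈ qInter Q) (hb : b ∈ qInter Q) (hab : a ≠ b) {e : PSet N}
    (he : e ∈ Hedge P) (hae : a ∈ e ∨ b ∈ e) : e = {a, b} := by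
  have hsub : qInter Q ⊆ e := hae.elim (hQ.qInter_subset he ha) (hQ.qInter_subset he hb)
  have hpair : {a, b} ⊆ e :=
    Finset.insert_subset (hsub ha) (Finset.singleton_subset_iff.mpr (hsub hb))
  by_contra hne
  have hd : Disjoint {a, b} (e \ {a, b}) := Finset.disjoint_sdiff
  have hI := I_pos_of_BPos hv hP he.2 (Finset.insert_nonempty a {b})
    (Finset.sdiff_nonempty.mpr fun h => hne (h.antisymm hpair)) hd
    (Finset.union_sdiff_of_subset hpair)
  linarith [I_le_two_mul_S_left hv hd, S_pair_eq_zero hv hP hQ ha hb hab]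

lemma qInter_eq_pair (hv : v.InSAC) (hP : P = v.PMI) (hQ : IsMaxClique P Q) {a b : Party N}
    (ha : a ∈ qInter Q) (hb : b ∈ qInter Q) (hab : a ≠ b) : qInter Q = {a, b} := by
  refine (Set.insert_subset ha (Set.singleton_subset_iff.mpr hb)).antisymm' ?_
  rw [← Finset.coe_pair]
  exact hQ.qInter_subset (pair_mem_hedge hv hP hQ ha hb hab) ha (Finset.mem_insert_self a {b})

lemma ncard_qInter_le_two (hv : v.InSAC) (hP : P = v.PMI) (hQ : IsMaxClique P Q) :
    (qInter Q).ncard ≤ 2 := by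
  by_contra! h
  obtain ⟨a, b, c, ha, hb, hc, hab, hac, hbc⟩ := (Set.two_lt_ncard_iff (Set.toFinite _)).mp h
  rw [qInter_eq_pair hv hP hQ ha hb hab] at hc
  simp only [Set.mem_insert_iff, Set.mem_singleton_iff] at hc
  tauto

end CommonVertices

section Connectivity

variable {N : ℕ}

lemma exists_hedge_of_reflTransGen {P : Set (MI N)} (hds : IsMIDownSet P) {Y : PSet N}
    {a c : Party N} (h : Relation.ReflTransGen (hStep (subEdges P Y)) a c) :
    a = c ∨ ∃ e ∈ Hedge P, e ⊆ Y ∧ a ∈ e ∧ c ∈ e := by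
  induction h with
  | refl => exact Or.inl rfl
  | tail _ hstep ih =>
    obtain ⟨f, ⟨hfY, hf⟩, hxf, hcf⟩ := hstep
    rcases ih with rfl | ⟨e, he, heY, hae, hxe⟩
    · exact Or.inr ⟨f, hf, hfY.subset, hxf, hcf⟩
    · exact Or.inr ⟨e ∪ f, union_mem_hedge hds he hf ⟨_, Finset.mem_inter.mpr ⟨hxe, hxf⟩⟩,
        Finset.union_subset heY hfY.subset, Finset.mem_union_left f hae,
        Finset.mem_union_right e hcf⟩

/-- The union of the hyperedges of `H_Y` through a fixed vertex `a` is again such a hyperedge,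
and connectivity makes it exhaust `Y`. -/
lemma mem_hedge_of_hConn {P : Set (MI N)} (hds : IsMIDownSet P) {Y : PSet N}
    (hY : 2 ≤ Y.card) (h : hConn Y (subEdges P Y)) : Y ∈ Hedge P := by
  obtain ⟨a, ha⟩ := Finset.card_pos.mp (by omega : 0 < Y.card)
  obtain ⟨b, hb, hba⟩ := Finset.exists_mem_ne hY a
  classical
  let T := Finset.univ.filter fun e : PSet N => e ∈ Hedge P ∧ e ⊆ Y ∧ a ∈ e
  have hT : ∀ c ∈ Y, c ≠ a → ∃ e ∈ T, c ∈ e := fun c hc hca => by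
    rcases exists_hedge_of_reflTransGen hds (h a ha c hc) with rfl | ⟨e, he, heY, hae, hce⟩
    · exact absurd rfl hca
    · exact ⟨e, Finset.mem_filter.mpr ⟨Finset.mem_univ e, he, heY, hae⟩, hce⟩
  obtain ⟨e, heT, -⟩ := hT b hb hba
  set U := T.sup' ⟨e, heT⟩ id
  have hU : U ∈ Hedge P ∧ U ⊆ Y ∧ a ∈ U := by
    refine Finset.sup'_induction (p := fun U => U ∈ Hedge P ∧ U ⊆ Y ∧ a ∈ U) _ _
      (fun e₁ h₁ e₂ h₂ => ?_) fun e he => (Finset.mem_filter.mp he).2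
    exact ⟨union_mem_hedge hds h₁.1 h₂.1 ⟨a, Finset.mem_inter.mpr ⟨h₁.2.2, h₂.2.2⟩⟩,
      Finset.union_subset h₁.2.1 h₂.2.1, Finset.mem_union_left _ h₁.2.2⟩
  have hUY : U = Y := by
    refine hU.2.1.antisymm fun c hc => ?_
    by_cases hca : c = a
    · exact hca ▸ hU.2.2
    · obtain ⟨e, heT, hce⟩ := hT c hc hca
      exact Finset.le_sup' id heT hce
  exact hUY ▸ hU.1

lemma not_hConn_univ_sdiff_singleton (hN : 2 ≤ N) {P : Set (MI N)} (hds : IsMIDownSet P)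
    {Q : Set (PSet N)} (hQ : IsMaxClique P Q) {ℓ : Party N} (hℓ : ℓ ∈ qInter Q) :
    ¬ hConn (Finset.univ \ {ℓ}) (subEdges P (Finset.univ \ {ℓ})) := by
  intro h
  have hcard : 2 ≤ (Finset.univ \ {ℓ} : PSet N).card := by
    rw [Finset.card_univ_sdiff, Fintype.card_fin, Finset.card_singleton]; omega
  have hVQ := hQ.mem_of_forall_inter_nonempty (mem_hedge_of_hConn hds hcard h) fun f hf => by
    obtain ⟨x, hx, hxℓ⟩ := Finset.exists_mem_ne (hQ.2.1.1 hf).1 ℓ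
    exact ⟨x, by simp [hx, hxℓ]⟩
  simpa using hℓ _ hVQ

lemma reflTransGen_hStep_eq_or_eq {E : Set (PSet N)} {a b c : Party N}
    (hE : ∀ e ∈ E, a ∈ e ∨ b ∈ e → e = {a, b}) (h : Relation.ReflTransGen (hStep E) a c) :
    c = a ∨ c = b := by
  induction h with
  | refl => exact Or.inl rfl
  | tail _ hstep ih =>
    obtain ⟨f, hf, hxf, hcf⟩ := hstep
    rw [hE f hf (by rcases ih with rfl | rfl <;> simp [hxf])] at hcf
    simpa using hcf

lemma hComp_univ_eq_pair {E : Set (PSet N)} {a b : Party N}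
    (hE : ∀ e ∈ E, a ∈ e ∨ b ∈ e → e = {a, b}) (hpair : {a, b} ∈ E) :
    hComp Finset.univ E a = {a, b} := by
  ext c
  simp only [hComp, Finset.mem_univ, true_and, Set.mem_insert_iff, Set.mem_singleton_iff]
  refine ⟨reflTransGen_hStep_eq_or_eq hE, ?_⟩
  rintro (rfl | rfl)
  · exact .refl
  · exact .single ⟨_, hpair, by simp, by simp⟩

lemma not_hConn_univ_of_forall_eq_pair (hN : 2 ≤ N) {E : Set (PSet N)} {a b : Party N}
    (hE : ∀ e ∈ E, a ∈ e ∨ b ∈ e → e = {a, b}) : ¬ hConn Finset.univ E := by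
  intro h
  have hlt : ({a, b} : PSet N).card < (Finset.univ : PSet N).card := by
    rw [Finset.card_univ, Fintype.card_fin]
    have : ({a, b} : PSet N).card ≤ 2 := Finset.card_le_two
    omega
  obtain ⟨c, -, hc⟩ := Finset.exists_mem_notMem_of_card_lt_card hlt
  rcases reflTransGen_hStep_eq_or_eq hE (h a (Finset.mem_univ _) c (Finset.mem_univ _))
    with rfl | rfl <;> simp at hc

end Connectivity

/-- For every KC-PMI `P` and max-clique `Q` of the line graph
`L_{H_P}`: (i) `|Q^∩| ∈ {0,1,2}`; (ii) if `|Q^∩| > 0` then for every `v_ℓ ∈ Q^∩` the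
sub-hypergraph `H_{⟦N⟧∖{ℓ}}` is disconnected; (iii) `|Q^∩| = 2` iff `H_P` is
disconnected and, writing `Q^∩ = {v_{ℓ₁}, v_{ℓ₂}}`, one of its connected components has
vertex set exactly `{v_{ℓ₁}, v_{ℓ₂}}` and contains the hyperedge `e_{{ℓ₁,ℓ₂}}`. -/
theorem statement15 {N : ℕ} (hN : 2 ≤ N) (P : Set (MI N)) (hP : IsKCPMI P)
    (Q : Set (PSet N)) (hQ : IsMaxClique P Q) :
    ((qInter Q).ncard = 0 ∨ (qInter Q).ncard = 1 ∨ (qInter Q).ncard = 2) ∧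
    (∀ ℓ : Party N, ℓ ∈ qInter Q →
      ¬ hConn (Finset.univ \ {ℓ}) (subEdges P (Finset.univ \ {ℓ}))) ∧
    ((qInter Q).ncard = 2 ↔
      (¬ hConn (Finset.univ : PSet N) (Hedge P) ∧
       ∃ ℓ₁ ℓ₂ : Party N, ℓ₁ ≠ ℓ₂ ∧
         qInter Q = {ℓ₁, ℓ₂} ∧
         hComp (Finset.univ : PSet N) (Hedge P) ℓ₁ = {ℓ₁, ℓ₂} ∧
         ({ℓ₁, ℓ₂} : PSet N) ∈ Hedge P)) := by
  obtain ⟨⟨v, hv, hPv⟩, hds⟩ := hP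
  refine ⟨?_, fun ℓ hℓ => not_hConn_univ_sdiff_singleton hN hds hQ hℓ, ⟨fun h2 => ?_, ?_⟩⟩
  · have := ncard_qInter_le_two hv hPv hQ
    omega
  · obtain ⟨a, b, hab, hq⟩ := Set.ncard_eq_two.mp h2
    have ha : a ∈ qInter Q := hq ▸ Set.mem_insert a {b}
    have hb : b ∈ qInter Q := hq ▸ Set.mem_insert_of_mem a rfl
    have hE : ∀ e ∈ Hedge P, a ∈ e ∨ b ∈ e → e = {a, b} := fun e he =>
      eq_pair_of_mem_hedge hv hPv hQ ha hb hab he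
    have hpair := pair_mem_hedge hv hPv hQ ha hb hab
    exact ⟨not_hConn_univ_of_forall_eq_pair hN hE, a, b, hab, hq, hComp_univ_eq_pair hE hpair,
      hpair⟩
  · rintro ⟨-, a, b, hab, hq, -, -⟩
    rw [hq]
    exact Set.ncard_pair hab

end HEC
end
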